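/- arXiv:1910.01322 — 5 statements merged into one kernel-verified Lean document; each statement's English description precedes it below -/
import Mathlib

section
/- Let n, k, r be integers with r ≥ 2, ⌊(k-1)/2⌋ ≥ r−1, and n ≥ k. Then the r-graph H_{n,k} is connected, contains no Berge-path of length k (every Berge-path in H_{n,k} has length at most k−1), and has exactly C(⌊(k-1)/2⌋, r-1)·(n − ⌊(k-1)/2⌋) + C(⌊(k-1)/2⌋, r) + [k even]·C(⌊(k-1)/2⌋, r-2) hyperedges. -/
open scoped Classical

/-- A Berge-path of length `t` in the hypergraph `H` (a family of hyperedges):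
an alternating sequence of `t+1` distinct vertices and `t` distinct hyperedges
`v₁, e₁, …, e_t, v_{t+1}` with `vᵢ, vᵢ₊₁ ∈ eᵢ`. -/
structure BergePath {V : Type*} (H : Finset (Finset V)) (t : ℕ) where
  verts : Fin (t + 1) → V
  edges : Fin t → Finset V
  verts_inj : Function.Injective verts
  edges_inj : Function.Injective edges
  edges_mem : ∀ i, edges i ∈ H
  fst_mem : ∀ i : Fin t, verts i.castSucc ∈ edges i
  snd_mem : ∀ i : Fin t, verts i.succ ∈ edges i

/-- A Berge-cycle of length `t` in the hypergraph `H`: `t` distinct vertices and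
`t` distinct hyperedges with `vᵢ, vᵢ₊₁ ∈ eᵢ`, indices mod `t`. -/
structure BergeCycle {V : Type*} (H : Finset (Finset V)) (t : ℕ) where
  verts : Fin t → V
  edges : Fin t → Finset V
  verts_inj : Function.Injective verts
  edges_inj : Function.Injective edges
  edges_mem : ∀ i, edges i ∈ H
  fst_mem : ∀ i, verts i ∈ edges i
  snd_mem : ∀ i : Fin t, verts ⟨(i.val + 1) % t, Nat.mod_lt _ i.pos⟩ ∈ edges i

/-- `u` and `v` are joined by a Berge-path of `H`. -/
def BergeReachable {V : Type*} (H : Finset (Finset V)) (u v : V) : Prop :=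
  ∃ t, ∃ P : BergePath H t, P.verts 0 = u ∧ P.verts (Fin.last t) = v

/-- A hypergraph on the vertex type `V` is connected if any two vertices are joined
by a Berge-path. -/
def HConnected {V : Type*} (H : Finset (Finset V)) : Prop :=
  ∀ u v : V, u ≠ v → BergeReachable H u v

/-- The degree of a vertex: the number of hyperedges containing it. -/
noncomputable def hdeg {V : Type*} (H : Finset (Finset V)) (v : V) : ℕ :=
  (H.filter (fun e => v ∈ e)).card

/-- The vertex neighborhood of `v` in `H`. -/
noncomputable def nbhd {V : Type*} [Fintype V] (H : Finset (Finset V)) (v : V) : Finset V :=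
  Finset.univ.filter (fun u => u ≠ v ∧ ∃ e ∈ H, v ∈ e ∧ u ∈ e)

/-- The sub-hypergraph induced by a set `S` of vertices: all hyperedges lying inside `S`. -/
noncomputable def restrictTo {V : Type*} (H : Finset (Finset V)) (S : Finset V) :
    Finset (Finset V) :=
  H.filter (fun e => e ⊆ S)

/-- `DelProcess H D S T` : starting from the vertex set `S`, the vertex set `T` can be
reached by repeatedly deleting a vertex whose degree in the current induced
sub-hypergraph is less than `D` (together with all hyperedges containing it). -/
inductive DelProcess {V : Type*} (H : Finset (Finset V)) (D : ℕ) :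
    Finset V → Finset V → Prop
  | refl (S : Finset V) : DelProcess H D S S
  | step (S T : Finset V) (v : V) (hv : v ∈ S)
      (hd : hdeg (restrictTo H S) v < D)
      (h : DelProcess H D (S.erase v) T) : DelProcess H D S T

/-- The edge family of `H_{n,k}` for odd `k`, on vertex set `S` with kernel `A`:
all `r`-subsets of `S` having at most one vertex outside `A`. -/
noncomputable def HnkFamilyOdd {V : Type*} (r : ℕ) (S A : Finset V) : Finset (Finset V) :=
  S.powerset.filter (fun s => s.card = r ∧ (s \ A).card ≤ 1)

/-- The edge family of `H_{n,k}` for even `k`: additionally all `r`-subsets consisting of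
`b1`, `b2` and `r-2` vertices of `A`. -/
noncomputable def HnkFamilyEven {V : Type*} (r : ℕ) (S A : Finset V) (b1 b2 : V) :
    Finset (Finset V) :=
  S.powerset.filter (fun s => s.card = r ∧ ((s \ A).card ≤ 1 ∨ s \ A = {b1, b2}))

/-- `H` is (a copy of) the extremal hypergraph `H_{m,k}` on the vertex set `S`
(where `m = |S|`). Note that `⌊(k-1)/2⌋` equals `(k-1)/2` in ℕ for odd `k`,
and `(k-2)/2` for even `k`. -/
def IsHnkOn {V : Type*} (r k : ℕ) (S : Finset V) (H : Finset (Finset V)) : Prop :=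
  ∃ A ⊆ S, A.card = (k - 1) / 2 ∧
    ((Odd k ∧ H = HnkFamilyOdd r S A) ∨
     (Even k ∧ ∃ b1 ∈ S \ A, ∃ b2 ∈ S \ A, b1 ≠ b2 ∧ H = HnkFamilyEven r S A b1 b2))

/-- The extremal number of hyperedges:
`C(⌊(k-1)/2⌋, r-1)·(n − ⌊(k-1)/2⌋) + C(⌊(k-1)/2⌋, r) + [2 ∣ k]·C(⌊(k-1)/2⌋, r-2)`. -/
def extremalCount (r k n : ℕ) : ℕ :=
  ((k - 1) / 2).choose (r - 1) * (n - (k - 1) / 2) + ((k - 1) / 2).choose r +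
    (if 2 ∣ k then ((k - 1) / 2).choose (r - 2) else 0)

/-- The threshold `N_{k,r}`. -/
def Nkr (r k : ℕ) : ℕ :=
  (r * (k - 1)).choose r + ((k - 1) / 2).choose (r - 1) * ((k - 1) / 2)
    - ((k - 1) / 2).choose r - (if 2 ∣ k then ((k - 1) / 2).choose (r - 2) else 0)
    + r * (k - 1)

/-! Every hyperedge of `H_{n,k}` has at most one vertex outside the kernel `A`, except the
hyperedges through the fixed pair `{b₁, b₂}` when `k` is even. Hence two consecutive vertices of
a Berge-path lie outside `A` at most once, and never when `k` is odd. As the vertices of a path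
are distinct, at most `|A|` of them lie in `A`, and every vertex outside `A` other than the first
is preceded by a vertex of `A` unless it ends such an exceptional step. So a path has at most
`2|A| + 1 + [k even] = k` vertices.

Two vertices lie in a common hyperedge unless both are outside `A`, in which case they are joined
through a vertex of `A`. The hyperedges are counted according to their trace `D = e \ A`: each
trace `D` is the trace of exactly `C(|A|, r - |D|)` hyperedges. -/

open Finset

variable {V : Type*}

lemma Function.Injective.succ_le_two_mul_card_add_one_add_card {t : ℕ} {f : Fin (t + 1) → V}
    (hf : Function.Injective f) (A : Finset V) :
    t + 1 ≤ 2 * #A + 1 + #{i : Fin t | f i.castSucc ∉ A ∧ f i.succ ∉ A} := by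
  have h_in : #{j | f j ∈ A} ≤ #A :=
    card_le_card_of_injOn f (fun j hj => (mem_filter.1 hj).2) hf.injOn
  have h_in_castSucc : #{i : Fin t | f i.castSucc ∈ A} ≤ #A :=
    card_le_card_of_injOn (f ∘ Fin.castSucc) (fun i hi => (mem_filter.1 hi).2)
      (hf.comp (Fin.castSucc_injective t)).injOn
  have h_out : #{j | f j ∉ A} ≤ 1 + #{i : Fin t | f i.succ ∉ A} := by
    rw [Fin.card_filter_univ_succ']
    split_ifs <;> omega
  have h_out_succ : #{i : Fin t | f i.succ ∉ A} ≤
      #{i : Fin t | f i.castSucc ∈ A} + #{i : Fin t | f i.castSucc ∉ A ∧ f i.succ ∉ A} := by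
    refine (card_le_card fun i => ?_).trans (card_union_le _ _)
    simp only [mem_filter, mem_univ, true_and, mem_union]
    tauto
  have h_total := card_filter_add_card_filter_not (s := univ) (fun j => f j ∈ A)
  simp only [card_univ, Fintype.card_fin] at h_total
  omega

namespace BergePath

variable {H : Finset (Finset V)} {t : ℕ}

lemma verts_castSucc_ne_verts_succ (P : BergePath H t) (i : Fin t) :
    P.verts i.castSucc ≠ P.verts i.succ :=
  P.verts_inj.ne (Fin.castSucc_lt_succ (i := i)).ne

lemma length_le_two_mul_card (P : BergePath H t) {A : Finset V} (hH : ∀ e ∈ H, #(e \ A) ≤ 1) :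
    t ≤ 2 * #A := by
  have h := P.verts_inj.succ_le_two_mul_card_add_one_add_card A
  suffices h_empty : #{i : Fin t | P.verts i.castSucc ∉ A ∧ P.verts i.succ ∉ A} = 0 by omega
  refine card_eq_zero.2 (filter_eq_empty_iff.2 fun i _ ⟨hx, hy⟩ => ?_)
  have h_two : 1 < #(P.edges i \ A) := one_lt_card.2
    ⟨_, mem_sdiff.2 ⟨P.fst_mem i, hx⟩, _, mem_sdiff.2 ⟨P.snd_mem i, hy⟩,
      P.verts_castSucc_ne_verts_succ i⟩
  exact absurd (hH _ (P.edges_mem i)) (not_le.2 h_two)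

lemma length_le_two_mul_card_add_one (P : BergePath H t) {A : Finset V} {b₁ b₂ : V}
    (hH : ∀ e ∈ H, #(e \ A) ≤ 1 ∨ e \ A ⊆ {b₁, b₂}) : t ≤ 2 * #A + 1 := by
  have h := P.verts_inj.succ_le_two_mul_card_add_one_add_card A
  suffices h_le : #{i : Fin t | P.verts i.castSucc ∉ A ∧ P.verts i.succ ∉ A} ≤ 1 by omega
  have h_pair : ∀ i : Fin t, P.verts i.castSucc ∉ A → P.verts i.succ ∉ A →
      P.verts i.castSucc ∈ ({b₁, b₂} : Finset V) ∧ P.verts i.succ ∈ ({b₁, b₂} : Finset V) := by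
    intro i hx hy
    have hx' := mem_sdiff.2 ⟨P.fst_mem i, hx⟩
    have hy' := mem_sdiff.2 ⟨P.snd_mem i, hy⟩
    rcases hH _ (P.edges_mem i) with h_le | h_sub
    · exact absurd h_le (not_le.2 (one_lt_card.2
        ⟨_, hx', _, hy', P.verts_castSucc_ne_verts_succ i⟩))
    · exact ⟨h_sub hx', h_sub hy'⟩
  refine card_le_one.2 fun i hi j hj => ?_
  simp only [mem_filter, mem_univ, true_and] at hi hj
  wlog hij : i < j generalizing i j
  · rcases (not_lt.1 hij).lt_or_eq with h | h
    · exact (this j i hj hi h).symm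
    · exact h.symm
  -- `vᵢ, vᵢ₊₁, vⱼ₊₁` are three distinct vertices of the path inside `{b₁, b₂}`
  have h₁ := h_pair i hi.1 hi.2
  have h₂ := (h_pair j hj.1 hj.2).2
  have hne₁ := P.verts_castSucc_ne_verts_succ i
  have hne₂ : P.verts i.castSucc ≠ P.verts j.succ :=
    P.verts_inj.ne (Fin.ne_of_lt (Fin.castSucc_lt_succ_iff.2 hij.le))
  have hne₃ : P.verts i.succ ≠ P.verts j.succ := P.verts_inj.ne (Fin.succ_lt_succ_iff.2 hij).ne
  simp only [mem_insert, mem_singleton] at h₁ h₂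
  grind

end BergePath

lemma bergeReachable_of_mem {H : Finset (Finset V)} {e : Finset V} (he : e ∈ H) {u v : V}
    (hu : u ∈ e) (hv : v ∈ e) (huv : u ≠ v) : BergeReachable H u v := by
  refine ⟨1, ⟨![u, v], ![e], ?_, ?_, ?_, ?_, ?_⟩, rfl, rfl⟩
  · intro i j hij
    fin_cases i <;> fin_cases j <;> simp_all
  · intro i j _
    exact Subsingleton.elim i j
  all_goals intro i; fin_cases i; simpa

lemma bergeReachable_of_mem_of_mem {H : Finset (Finset V)} {e₁ e₂ : Finset V} (he₁ : e₁ ∈ H)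
    (he₂ : e₂ ∈ H) (he : e₁ ≠ e₂) {u w v : V} (hu : u ∈ e₁) (hw₁ : w ∈ e₁) (hw₂ : w ∈ e₂)
    (hv : v ∈ e₂) (huw : u ≠ w) (hwv : w ≠ v) (huv : u ≠ v) : BergeReachable H u v := by
  refine ⟨2, ⟨![u, w, v], ![e₁, e₂], ?_, ?_, ?_, ?_, ?_⟩, rfl, rfl⟩
  · intro i j hij
    fin_cases i <;> fin_cases j <;> simp_all [eq_comm]
  · intro i j hij
    fin_cases i <;> fin_cases j <;> simp_all [eq_comm]
  all_goals intro i; fin_cases i <;> simpa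

lemma hnkFamilyOdd_subset_hnkFamilyEven (r : ℕ) (S A : Finset V) (b₁ b₂ : V) :
    HnkFamilyOdd r S A ⊆ HnkFamilyEven r S A b₁ b₂ :=
  monotone_filter_right _ fun _ _ => And.imp_right Or.inl

lemma exists_mem_hnkFamilyOdd_superset {r : ℕ} {S A T : Finset V} {b : V} (hA : A ⊆ S)
    (hbS : b ∈ S) (hbA : b ∉ A) (hT : T ⊆ insert b A) (hTr : #T ≤ r) (hrA : r ≤ #A + 1) :
    ∃ e ∈ HnkFamilyOdd r S A, T ⊆ e ∧ e ⊆ insert b A := by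
  obtain ⟨e, hTe, heb, he⟩ :=
    exists_subsuperset_card_eq hT hTr (by rwa [card_insert_of_notMem hbA])
  refine ⟨e, mem_filter.2 ⟨mem_powerset.2 (heb.trans (insert_subset hbS hA)), he, ?_⟩, hTe, heb⟩
  calc #(e \ A) ≤ #({b} : Finset V) := card_le_card fun x hx => by
        simp only [mem_sdiff, mem_singleton] at hx ⊢
        exact (mem_insert.1 (heb hx.1)).resolve_right hx.2
    _ = 1 := card_singleton b

lemma hConnected_of_hnkFamilyOdd_subset [Fintype V] {r : ℕ} {A : Finset V}
    {H : Finset (Finset V)} (hH : HnkFamilyOdd r univ A ⊆ H) (hr : 2 ≤ r) (hrA : r ≤ #A + 1)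
    (hA : #A < Fintype.card V) : HConnected H := by
  have h_edge : ∀ b ∉ A, ∀ T ⊆ insert b A, #T ≤ r → ∃ e ∈ H, T ⊆ e ∧ e ⊆ insert b A :=
    fun b hbA T hT hTr =>
      (exists_mem_hnkFamilyOdd_superset (subset_univ A) (mem_univ b) hbA hT hTr hrA).imp
        fun e ⟨he, h⟩ => ⟨hH he, h⟩
  intro u v huv
  by_cases huvA : u ∉ A ∧ v ∉ A
  · obtain ⟨w, hw⟩ : A.Nonempty := card_pos.1 (by omega)
    obtain ⟨e₁, he₁, hue₁, he₁u⟩ := h_edge u huvA.1 {u, w}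
      (insert_subset (mem_insert_self u A) (singleton_subset_iff.2 (mem_insert_of_mem hw)))
      (card_le_two.trans hr)
    obtain ⟨e₂, he₂, hwe₂, he₂v⟩ := h_edge v huvA.2 {w, v}
      (insert_subset (mem_insert_of_mem hw) (singleton_subset_iff.2 (mem_insert_self v A)))
      (card_le_two.trans hr)
    have hne : e₁ ≠ e₂ := by
      rintro rfl
      rcases mem_insert.1 (he₂v (hue₁ (mem_insert_self u _))) with h | h
      exacts [huv h, huvA.1 h]
    exact bergeReachable_of_mem_of_mem he₁ he₂ hne (hue₁ (mem_insert_self u _))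
      (hue₁ (mem_insert_of_mem (mem_singleton_self w))) (hwe₂ (mem_insert_self w _))
      (hwe₂ (mem_insert_of_mem (mem_singleton_self v))) (fun h => huvA.1 (h ▸ hw))
      (fun h => huvA.2 (h ▸ hw)) huv
  · obtain ⟨b, hbA, hub, hvb⟩ : ∃ b ∉ A, u ∈ insert b A ∧ v ∈ insert b A := by
      by_cases hu : u ∈ A
      · by_cases hv : v ∈ A
        · obtain ⟨b, -, hb⟩ := exists_mem_notMem_of_card_lt_card (t := univ) (by simpa)
          exact ⟨b, hb, mem_insert_of_mem hu, mem_insert_of_mem hv⟩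
        · exact ⟨v, hv, mem_insert_of_mem hu, mem_insert_self v A⟩
      · exact ⟨u, hu, mem_insert_self u A, mem_insert_of_mem (not_not.1 fun hv => huvA ⟨hu, hv⟩)⟩
    obtain ⟨e, he, huve, -⟩ := h_edge b hbA {u, v} (insert_subset hub (singleton_subset_iff.2 hvb))
      (card_le_two.trans hr)
    exact bergeReachable_of_mem he (huve (mem_insert_self u _))
      (huve (mem_insert_of_mem (mem_singleton_self v))) huv

lemma card_filter_powerset_sdiff_eq {S A D : Finset V} (hA : A ⊆ S) (hD : D ⊆ S \ A) {r : ℕ}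
    (hDr : #D ≤ r) :
    #{s ∈ S.powerset | #s = r ∧ s \ A = D} = (#A).choose (r - #D) := by
  have hDA : Disjoint D A := disjoint_of_subset_left hD sdiff_disjoint
  rw [← card_powersetCard]
  refine card_nbij' (· ∩ A) (· ∪ D) (fun s hs => ?_) (fun B hB => ?_) (fun s hs => ?_)
    (fun B hB => ?_) <;> simp only [mem_coe, mem_filter, mem_powerset, mem_powersetCard] at *
  · obtain ⟨-, rfl, rfl⟩ := hs
    have := card_sdiff_add_card_inter s A
    exact ⟨inter_subset_right, by omega⟩
  · refine ⟨union_subset (hB.1.trans hA) (hD.trans sdiff_subset), ?_, ?_⟩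
    · rw [card_union_of_disjoint (disjoint_of_subset_left hB.1 hDA.symm)]
      omega
    · rw [union_sdiff_distrib, sdiff_eq_empty_iff_subset.2 hB.1, empty_union, hDA.sdiff_eq_left]
  · obtain ⟨-, -, rfl⟩ := hs
    rw [union_comm, sdiff_union_inter]
  · rw [union_inter_distrib_right, inter_eq_left.2 hB.1, disjoint_iff_inter_eq_empty.1 hDA,
      union_empty]

lemma card_filter_powerset_sdiff_mem {S A : Finset V} (hA : A ⊆ S) {r : ℕ}
    {F : Finset (Finset V)} (hF : ∀ D ∈ F, D ⊆ S \ A ∧ #D ≤ r) :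
    #{s ∈ S.powerset | #s = r ∧ s \ A ∈ F} = ∑ D ∈ F, (#A).choose (r - #D) := by
  rw [card_eq_sum_card_fiberwise (f := (· \ A)) (t := F) (fun s hs => (mem_filter.1 hs).2.2)]
  refine sum_congr rfl fun D hD => ?_
  rw [← card_filter_powerset_sdiff_eq hA (hF D hD).1 (hF D hD).2, filter_filter]
  exact congrArg card <| filter_congr fun s _ =>
    ⟨fun h => ⟨h.1.1, h.2⟩, fun ⟨h, hs⟩ => ⟨⟨h, hs ▸ hD⟩, hs⟩⟩

lemma mem_insert_empty_image_singleton_iff {T D : Finset V} (hD : D ⊆ T) :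
    D ∈ insert ∅ (T.image singleton) ↔ #D ≤ 1 := by
  rw [mem_insert, mem_image, Nat.le_one_iff_eq_zero_or_eq_one, card_eq_zero, card_eq_one]
  refine or_congr_right ⟨fun ⟨b, _, hb⟩ => ⟨b, hb.symm⟩, fun ⟨b, hb⟩ => ⟨b, ?_, hb.symm⟩⟩
  exact hD (hb ▸ mem_singleton_self b)

lemma hnkFamilyOdd_eq_filter (r : ℕ) (S A : Finset V) :
    HnkFamilyOdd r S A =
      {s ∈ S.powerset | #s = r ∧ s \ A ∈ insert ∅ ((S \ A).image singleton)} :=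
  filter_congr fun s hs => by
    rw [mem_insert_empty_image_singleton_iff (sdiff_subset_sdiff (mem_powerset.1 hs) le_rfl)]

lemma hnkFamilyEven_eq_filter (r : ℕ) (S A : Finset V) (b₁ b₂ : V) :
    HnkFamilyEven r S A b₁ b₂ =
      {s ∈ S.powerset | #s = r ∧ s \ A ∈ insert {b₁, b₂} (insert ∅ ((S \ A).image singleton))} :=
  filter_congr fun s hs => by
    rw [mem_insert, mem_insert_empty_image_singleton_iff
      (sdiff_subset_sdiff (mem_powerset.1 hs) le_rfl), or_comm]

lemma card_hnkFamilyOdd {r : ℕ} (hr : 1 ≤ r) {S A : Finset V} (hA : A ⊆ S) :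
    #(HnkFamilyOdd r S A) = (#A).choose r + #(S \ A) * (#A).choose (r - 1) := by
  have hF : ∀ D ∈ insert ∅ ((S \ A).image singleton), D ⊆ S \ A ∧ #D ≤ r := by
    simp only [mem_insert, mem_image]
    rintro D (rfl | ⟨b, hb, rfl⟩)
    · exact ⟨empty_subset _, Nat.zero_le r⟩
    · exact ⟨singleton_subset_iff.2 hb, hr⟩
  rw [hnkFamilyOdd_eq_filter, card_filter_powerset_sdiff_mem hA hF,
    sum_insert (by simp), sum_image (singleton_injective.injOn)]
  simp only [card_empty, card_singleton, Nat.sub_zero, sum_const, smul_eq_mul]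

lemma card_hnkFamilyEven {r : ℕ} (hr : 2 ≤ r) {S A : Finset V} (hA : A ⊆ S) {b₁ b₂ : V}
    (hb₁ : b₁ ∈ S \ A) (hb₂ : b₂ ∈ S \ A) (hb : b₁ ≠ b₂) :
    #(HnkFamilyEven r S A b₁ b₂) =
      (#A).choose r + #(S \ A) * (#A).choose (r - 1) + (#A).choose (r - 2) := by
  have hF : ∀ D ∈ insert {b₁, b₂} (insert ∅ ((S \ A).image singleton)), D ⊆ S \ A ∧ #D ≤ r := by
    simp only [mem_insert, mem_image]
    rintro D (rfl | rfl | ⟨b, hb, rfl⟩)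
    · exact ⟨insert_subset hb₁ (singleton_subset_iff.2 hb₂), card_le_two.trans hr⟩
    · exact ⟨empty_subset _, Nat.zero_le r⟩
    · exact ⟨singleton_subset_iff.2 hb, (card_singleton b).trans_le (by omega)⟩
  have h_pair : ({b₁, b₂} : Finset V) ∉ insert ∅ ((S \ A).image singleton) := by
    rw [mem_insert_empty_image_singleton_iff (insert_subset hb₁ (singleton_subset_iff.2 hb₂)),
      card_pair hb]
    omega
  rw [hnkFamilyEven_eq_filter, card_filter_powerset_sdiff_mem hA hF, sum_insert h_pair,
    ← card_filter_powerset_sdiff_mem hA fun D hD => hF D (mem_insert_of_mem hD),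
    ← hnkFamilyOdd_eq_filter, card_hnkFamilyOdd (by omega) hA, card_pair hb, add_comm]

lemma exists_isHnkOn (r : ℕ) {k : ℕ} {S : Finset V} (hk : 0 < k) (hkS : k ≤ #S) :
    ∃ H, IsHnkOn r k S H := by
  obtain ⟨A, hAS, hA⟩ := exists_subset_card_eq (show (k - 1) / 2 ≤ #S by omega)
  rcases Nat.even_or_odd k with hk_even | hk_odd
  · have h_two : 1 < #(S \ A) := by
      rw [card_sdiff_of_subset hAS, hA]
      obtain ⟨m, rfl⟩ := hk_even
      omega
    obtain ⟨b₁, hb₁, b₂, hb₂, hb⟩ := one_lt_card.1 h_two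
    exact ⟨_, A, hAS, hA, Or.inr ⟨hk_even, b₁, hb₁, b₂, hb₂, hb, rfl⟩⟩
  · exact ⟨_, A, hAS, hA, Or.inl ⟨hk_odd, rfl⟩⟩

namespace IsHnkOn

variable {r k : ℕ} {S : Finset V} {H : Finset (Finset V)}

lemma length_le (h : IsHnkOn r k S H) (hk : 0 < k) {t : ℕ} (P : BergePath H t) : t ≤ k - 1 := by
  obtain ⟨A, -, hA, ⟨⟨m, rfl⟩, rfl⟩ | ⟨⟨m, rfl⟩, b₁, -, b₂, -, -, rfl⟩⟩ := h
  · have := P.length_le_two_mul_card fun e he => (mem_filter.1 he).2.2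
    omega
  · have := P.length_le_two_mul_card_add_one (b₁ := b₁) (b₂ := b₂) fun e he =>
      (mem_filter.1 he).2.2.imp_right le_of_eq
    omega

lemma hConnected [Fintype V] (h : IsHnkOn r k univ H) (hr : 2 ≤ r) (hrk : r - 1 ≤ (k - 1) / 2)
    (hk : (k - 1) / 2 < Fintype.card V) : HConnected H := by
  obtain ⟨A, -, hA, h⟩ := h
  refine hConnected_of_hnkFamilyOdd_subset (A := A) ?_ hr (by omega) (by omega)
  rcases h with ⟨-, rfl⟩ | ⟨-, b₁, -, b₂, -, -, rfl⟩
  exacts [subset_rfl, hnkFamilyOdd_subset_hnkFamilyEven r univ A b₁ b₂]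

lemma card_eq_extremalCount (h : IsHnkOn r k S H) (hr : 2 ≤ r) :
    #H = extremalCount r k #S := by
  obtain ⟨A, hAS, hA, ⟨hk_odd, rfl⟩ | ⟨hk_even, b₁, hb₁, b₂, hb₂, hb, rfl⟩⟩ := h
  · rw [card_hnkFamilyOdd (by omega) hAS, card_sdiff_of_subset hAS, hA, extremalCount,
      if_neg (Nat.not_even_iff_odd.2 hk_odd ∘ even_iff_two_dvd.2)]
    ring
  · rw [card_hnkFamilyEven hr hAS hb₁ hb₂ hb, card_sdiff_of_subset hAS, hA, extremalCount,
      if_pos (even_iff_two_dvd.1 hk_even)]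
    ring

end IsHnkOn

/-- For `r ≥ 2`, `⌊(k-1)/2⌋ ≥ r−1` and `n ≥ k`, the hypergraph `H_{n,k}`
exists, is connected, contains no Berge-path of length `k` (every Berge-path has length at
most `k−1`), and has exactly the extremal number of hyperedges. -/
theorem Hnk_properties (n r k : ℕ) (hr : 2 ≤ r) (hrk : r - 1 ≤ (k - 1) / 2) (hnk : k ≤ n) :
    (∃ H : Finset (Finset (Fin n)), IsHnkOn r k (Finset.univ : Finset (Fin n)) H) ∧
    ∀ H : Finset (Finset (Fin n)), IsHnkOn r k (Finset.univ : Finset (Fin n)) H →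
      HConnected H ∧ IsEmpty (BergePath H k) ∧
      (∀ t, Nonempty (BergePath H t) → t ≤ k - 1) ∧
      H.card = extremalCount r k n := by
  have hk : 0 < k := by omega
  refine ⟨exists_isHnkOn r hk (by simpa using hnk), fun H hH => ?_⟩
  have h_length : ∀ t, Nonempty (BergePath H t) → t ≤ k - 1 := fun _ ⟨P⟩ => hH.length_le hk P
  refine ⟨hH.hConnected hr hrk (by rw [Fintype.card_fin]; omega), ⟨fun P => ?_⟩, h_length, ?_⟩
  · have := h_length k ⟨P⟩
    omega
  · simpa using hH.card_eq_extremalCount hr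
end

section
/- Let k and r be integers with k ≥ 2r+13 ≥ 18, and let H' be an r-uniform hypergraph with at least one hyperedge, containing no Berge-path of length k, in which every vertex has degree at least C(⌊(k-1)/2⌋, r-1). Then H' contains a longest Berge-path P, with defining vertices u_1, ..., u_{l+1} and set of defining hyperedges F = {f_1, ..., f_l}, such that |N_{H'∖F}(u_1)| ≥ ⌊(k-1)/2⌋ and |N_{H'∖F}(u_{l+1})| ≥ ⌊(k-1)/2⌋. -/
open scoped Classical

/-!
Let `m = ⌊(k-1)/2⌋` and let `P` be a longest path, with edge set `F`, so `|F| ≤ k - 1 ≤ 2m + 1`.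
A vertex with fewer than `m` neighbours in `H' ∖ F` lies in at most `C(m-1, r-1)` edges outside
`F`, so by the degree condition and Pascal's rule it lies in at least `C(m-1, r-2)` edges of `F`.
For `r ≥ 4` this exceeds `|F|`, so every vertex has `m` such neighbours. For `r = 3`, if the end
`v₀` is bad it lies in `≥ m - 1` path edges `eⱼ`, and the Pósa rotation along any of them is a
longest path with the same edges and the same other end, now starting at `vⱼ`; double counting
the incidences of `F` shows that some such `vⱼ` is good. Treating the two ends in turn, via
reversal, gives the theorem.
-/

open Finset

def Fin.revPrefix {n : ℕ} (j : ℕ) (hj : j ≤ n) (i : Fin n) : Fin n :=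
  if h : i.1 < j then ⟨j - 1 - i, by omega⟩ else i

lemma Fin.val_revPrefix {n j : ℕ} (hj : j ≤ n) (i : Fin n) :
    (revPrefix j hj i : ℕ) = if i.1 < j then j - 1 - i else i := by
  unfold revPrefix; split_ifs <;> rfl

lemma Fin.revPrefix_involutive {n j : ℕ} (hj : j ≤ n) :
    Function.Involutive (revPrefix j hj) := by
  intro i
  ext
  simp only [val_revPrefix]
  split_ifs <;> omega

namespace BergePath

variable {V : Type*} {H : Finset (Finset V)} {t : ℕ}

def nil (v : V) : BergePath H 0 where
  verts _ := v
  edges := Fin.elim0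
  verts_inj _ _ _ := Subsingleton.elim (α := Fin 1) _ _
  edges_inj := Function.injective_of_subsingleton _
  edges_mem i := i.elim0
  fst_mem i := i.elim0
  snd_mem i := i.elim0

def trunc (P : BergePath H t) (s : ℕ) (hs : s ≤ t) : BergePath H s where
  verts i := P.verts (i.castLE (by omega))
  edges i := P.edges (i.castLE hs)
  verts_inj _ _ h := Fin.castLE_injective _ (P.verts_inj h)
  edges_inj _ _ h := Fin.castLE_injective _ (P.edges_inj h)
  edges_mem _ := P.edges_mem _
  fst_mem i := P.fst_mem (i.castLE hs)
  snd_mem i := P.snd_mem (i.castLE hs)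

lemma exists_longest {k : ℕ} (hk : IsEmpty (BergePath H k)) (h0 : Nonempty (BergePath H 0)) :
    ∃ l < k, Nonempty (BergePath H l) ∧ ∀ t, Nonempty (BergePath H t) → t ≤ l := by
  have hlt : ∀ t, Nonempty (BergePath H t) → t < k := fun t ⟨P⟩ => by
    by_contra! h
    exact hk.false (P.trunc k h)
  let l := Nat.findGreatest (fun t => Nonempty (BergePath H t)) k
  have hl : Nonempty (BergePath H l) :=
    Nat.findGreatest_spec (P := fun t => Nonempty (BergePath H t)) (Nat.zero_le k) h0
  exact ⟨l, hlt l hl, hl, fun t ht => Nat.le_findGreatest (hlt t ht).le ht⟩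

def reindex (P : BergePath H t) (σ : Fin (t + 1) → Fin (t + 1)) (τ : Fin t → Fin t)
    (hσ : σ.Injective) (hτ : τ.Injective)
    (hfst : ∀ i, P.verts (σ i.castSucc) ∈ P.edges (τ i))
    (hsnd : ∀ i, P.verts (σ i.succ) ∈ P.edges (τ i)) : BergePath H t where
  verts := P.verts ∘ σ
  edges := P.edges ∘ τ
  verts_inj := P.verts_inj.comp hσ
  edges_inj := P.edges_inj.comp hτ
  edges_mem _ := P.edges_mem _
  fst_mem := hfst
  snd_mem := hsnd

def reverse (P : BergePath H t) : BergePath H t :=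
  P.reindex Fin.rev Fin.rev Fin.rev_injective Fin.rev_injective
    (fun i => by simpa [Fin.rev_castSucc] using P.snd_mem i.rev)
    (fun i => by simpa [Fin.rev_succ] using P.fst_mem i.rev)

lemma reverse_verts_last (P : BergePath H t) : P.reverse.verts (Fin.last t) = P.verts 0 := by
  simp [reverse, reindex]

/-- Pósa rotation: if `v₀ ∈ eⱼ`, the path `vⱼ, eⱼ₋₁, …, e₀, v₀, eⱼ, vⱼ₊₁, …` -/
def rotate (P : BergePath H t) (j : Fin t) (hj : P.verts 0 ∈ P.edges j) : BergePath H t :=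
  P.reindex (Fin.revPrefix (j + 1) (by omega)) (Fin.revPrefix j j.2.le)
    (Fin.revPrefix_involutive _).injective (Fin.revPrefix_involutive _).injective
    (fun i => by
      rcases lt_trichotomy i.1 j.1 with h | h | h
      · convert P.snd_mem (Fin.revPrefix j j.2.le i) using 2
        ext; simp only [Fin.val_revPrefix, Fin.val_succ, Fin.val_castSucc]; split_ifs <;> omega
      · convert hj using 2 <;> ext <;>
          simp only [Fin.val_revPrefix, Fin.val_castSucc, Fin.val_zero] <;> split_ifs <;> omega
      · convert P.fst_mem i using 2 <;>
        ext <;> simp only [Fin.val_revPrefix, Fin.val_castSucc] <;> split_ifs <;> omega)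
    (fun i => by
      rcases lt_or_ge i.1 j.1 with h | h
      · convert P.fst_mem (Fin.revPrefix j j.2.le i) using 2
        ext; simp only [Fin.val_revPrefix, Fin.val_succ, Fin.val_castSucc]; split_ifs <;> omega
      · convert P.snd_mem i using 2 <;>
        ext <;> simp only [Fin.val_revPrefix, Fin.val_succ] <;> split_ifs <;> omega)

@[simp] lemma rotate_verts_zero (P : BergePath H t) (j : Fin t) (hj : P.verts 0 ∈ P.edges j) :
    (P.rotate j hj).verts 0 = P.verts j.castSucc := by
  simp only [rotate, reindex, Function.comp_apply]
  congr 1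

@[simp] lemma rotate_verts_last (P : BergePath H t) (j : Fin t) (hj : P.verts 0 ∈ P.edges j) :
    (P.rotate j hj).verts (Fin.last t) = P.verts (Fin.last t) := by
  simp only [rotate, reindex, Function.comp_apply]
  congr 1; ext; simp only [Fin.val_revPrefix, Fin.val_last]; split_ifs <;> omega

noncomputable def edgeFinset (P : BergePath H t) : Finset (Finset V) := univ.image P.edges

lemma edgeFinset_subset (P : BergePath H t) : P.edgeFinset ⊆ H := by
  simp [edgeFinset, image_subset_iff, P.edges_mem]

lemma card_edgeFinset (P : BergePath H t) : #P.edgeFinset = t := by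
  simp [edgeFinset, card_image_of_injective _ P.edges_inj]

lemma hdeg_edgeFinset (P : BergePath H t) (v : V) :
    hdeg P.edgeFinset v = #{i | v ∈ P.edges i} := by
  rw [hdeg, edgeFinset, filter_image, card_image_of_injective _ P.edges_inj]

lemma filter_forall_ne_edges (P : BergePath H t) :
    H.filter (fun e => ∀ i, e ≠ P.edges i) = H \ P.edgeFinset := by
  ext e; simp [edgeFinset, eq_comm]

lemma edgeFinset_reindex (P : BergePath H t) (σ τ) (hσ hτ hfst hsnd) :
    (P.reindex σ τ hσ hτ hfst hsnd).edgeFinset = P.edgeFinset := by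
  rw [edgeFinset, reindex, ← image_image,
    image_univ_of_surjective (Finite.surjective_of_injective hτ)]
  rfl

@[simp] lemma edgeFinset_reverse (P : BergePath H t) : P.reverse.edgeFinset = P.edgeFinset :=
  P.edgeFinset_reindex ..

@[simp] lemma edgeFinset_rotate (P : BergePath H t) (j : Fin t) (hj : P.verts 0 ∈ P.edges j) :
    (P.rotate j hj).edgeFinset = P.edgeFinset :=
  P.edgeFinset_reindex ..

end BergePath

section Degree

variable {V : Type*}

lemma hdeg_le_hdeg_sdiff_add_hdeg (H D : Finset (Finset V)) (v : V) :
    hdeg H v ≤ hdeg (H \ D) v + hdeg D v := by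
  unfold hdeg
  calc #(H.filter (v ∈ ·)) ≤ #((H \ D).filter (v ∈ ·) ∪ D.filter (v ∈ ·)) :=
        card_le_card fun e he => by grind
    _ ≤ _ := card_union_le _ _

lemma hdeg_le_card (H : Finset (Finset V)) (v : V) : hdeg H v ≤ #H := card_filter_le _ _

lemma hdeg_le_choose_card_nbhd [Fintype V] {H : Finset (Finset V)} {r : ℕ}
    (huni : ∀ e ∈ H, #e = r) (v : V) : hdeg H v ≤ (#(nbhd H v)).choose (r - 1) := by
  rw [← card_powersetCard]
  refine card_le_card_of_injOn (·.erase v) (fun e he => ?_) (fun e he f hf hef => ?_)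
  · simp only [mem_coe, mem_filter] at he
    rw [mem_coe, mem_powersetCard, card_erase_of_mem he.2, huni e he.1]
    refine ⟨fun u hu => ?_, rfl⟩
    rw [mem_erase] at hu
    simp only [nbhd, mem_filter, mem_univ, true_and]
    exact ⟨hu.1, e, he.1, he.2, hu.2⟩
  · simp only [mem_coe, mem_filter] at he hf
    rw [← insert_erase he.2, ← insert_erase hf.2]
    exact congrArg _ hef

lemma choose_le_hdeg_of_card_nbhd_sdiff_lt [Fintype V] {H D : Finset (Finset V)} {r m : ℕ}
    {v : V} (huni : ∀ e ∈ H, #e = r) (hr : 2 ≤ r) (hv : m.choose (r - 1) ≤ hdeg H v)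
    (hN : #(nbhd (H \ D) v) < m) : (m - 1).choose (r - 2) ≤ hdeg D v := by
  have hsplit := hdeg_le_hdeg_sdiff_add_hdeg H D v
  have hout : hdeg (H \ D) v ≤ (m - 1).choose (r - 1) :=
    (hdeg_le_choose_card_nbhd (fun e he => huni e (mem_sdiff.1 he).1) v).trans
      (Nat.choose_le_choose _ (by omega))
  obtain ⟨n, rfl⟩ : ∃ n, m = n + 1 := ⟨m - 1, by omega⟩
  obtain ⟨s, rfl⟩ : ∃ s, r = s + 2 := ⟨r - 2, by omega⟩
  simp only [Nat.add_sub_cancel, show s + 2 - 1 = s + 1 by omega, Nat.choose_succ_succ'] at *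
  omega

lemma card_mul_le_card_mul_of_le_hdeg {D : Finset (Finset V)} {S : Finset V} {r c : ℕ}
    (huni : ∀ e ∈ D, #e = r) (hS : ∀ v ∈ S, c ≤ hdeg D v) : #S * c ≤ #D * r :=
  calc #S * c ≤ ∑ e ∈ D, #(S ∩ e) := le_sum_card_inter hS
    _ ≤ ∑ e ∈ D, #e := sum_le_sum fun e _ => card_le_card inter_subset_right
    _ = #D * r := by rw [sum_congr rfl huni, sum_const, smul_eq_mul]

end Degree

lemma Nat.choose_le_choose_of_le_half {n a b : ℕ} (hab : a ≤ b) (hb : b ≤ n / 2) :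
    n.choose a ≤ n.choose b := by
  induction b, hab using Nat.le_induction with
  | base => rfl
  | succ b hab ih => exact (ih (by omega)).trans (Nat.choose_le_succ_of_lt_half_left (by omega))

lemma Nat.choose_two_le_choose {n a : ℕ} (ha : 2 ≤ a) (han : a + 2 ≤ n) :
    n.choose 2 ≤ n.choose a := by
  rcases le_or_gt a (n / 2) with h | h
  · exact choose_le_choose_of_le_half ha h
  · rw [← choose_symm (by omega : a ≤ n)]
    exact choose_le_choose_of_le_half (by omega) (by omega)

lemma two_mul_add_one_lt_choose {r m : ℕ} (hr : 4 ≤ r) (hm : r + 6 ≤ m) :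
    2 * m + 1 < (m - 1).choose (r - 2) := by
  refine lt_of_lt_of_le ?_ (Nat.choose_two_le_choose (by omega) (by omega))
  rw [Nat.choose_two_right]
  obtain ⟨n, rfl⟩ : ∃ n, m = n + 10 := ⟨m - 10, by omega⟩
  rw [Nat.lt_iff_add_one_le, Nat.le_div_iff_mul_le two_pos]
  simp only [show n + 10 - 1 = n + 9 by omega, show n + 9 - 1 = n + 8 by omega]
  nlinarith

namespace BergePath

variable {V : Type*} [Fintype V] {H : Finset (Finset V)} {r m l : ℕ}

lemma le_card_nbhd_of_four_le (huni : ∀ e ∈ H, #e = r) (hmin : ∀ v, m.choose (r - 1) ≤ hdeg H v)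
    (hr : 4 ≤ r) (hm : r + 6 ≤ m) (hl : l ≤ 2 * m + 1) (P : BergePath H l) (v : V) :
    m ≤ #(nbhd (H \ P.edgeFinset) v) := by
  by_contra! hN
  have hcount := choose_le_hdeg_of_card_nbhd_sdiff_lt huni (by omega) (hmin v) hN
  have hle := P.card_edgeFinset ▸ hdeg_le_card P.edgeFinset v
  have := two_mul_add_one_lt_choose hr hm
  omega

lemma exists_mem_edges_le_card_nbhd (huni : ∀ e ∈ H, #e = 3)
    (hmin : ∀ v, m.choose 2 ≤ hdeg H v) (hm : 9 ≤ m) (hl : l ≤ 2 * m + 1) (P : BergePath H l)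
    (h0 : #(nbhd (H \ P.edgeFinset) (P.verts 0)) < m) :
    ∃ j, ∃ _ : P.verts 0 ∈ P.edges j, m ≤ #(nbhd (H \ P.edgeFinset) (P.verts j.castSucc)) := by
  by_contra! hbad
  -- The `≥ m - 1` vertices `vⱼ` with `v₀ ∈ eⱼ` would each lie in `≥ m - 1` of the `l ≤ 2m + 1`
  -- path edges, which have only `3l` vertex incidences in total.
  have hpathEdges : ∀ v, #(nbhd (H \ P.edgeFinset) v) < m → m - 1 ≤ hdeg P.edgeFinset v :=
    fun v hv => by simpa using choose_le_hdeg_of_card_nbhd_sdiff_lt huni (by norm_num) (hmin v) hv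
  let S := (univ.filter fun j => P.verts 0 ∈ P.edges j).image fun j => P.verts j.castSucc
  have hS : #S = hdeg P.edgeFinset (P.verts 0) :=
    (card_image_of_injective _ (P.verts_inj.comp (Fin.castSucc_injective _))).trans
      (P.hdeg_edgeFinset _).symm
  have hcount : #S * (m - 1) ≤ #P.edgeFinset * 3 := by
    refine card_mul_le_card_mul_of_le_hdeg (fun e he => huni e (P.edgeFinset_subset he)) ?_
    simp only [S, mem_image, mem_filter, mem_univ, true_and]
    rintro _ ⟨j, hj, rfl⟩
    exact hpathEdges _ (hbad j hj)
  have h0' := hS ▸ hpathEdges _ h0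
  rw [card_edgeFinset] at hcount
  obtain ⟨n, rfl⟩ : ∃ n, m = n + 9 := ⟨m - 9, by omega⟩
  simp only [show n + 9 - 1 = n + 8 by omega] at h0' hcount
  nlinarith

lemma exists_le_card_nbhd_verts_zero (huni : ∀ e ∈ H, #e = r)
    (hmin : ∀ v, m.choose (r - 1) ≤ hdeg H v) (hr : 3 ≤ r) (hm : r + 6 ≤ m)
    (hl : l ≤ 2 * m + 1) (P : BergePath H l) :
    ∃ Q : BergePath H l, Q.edgeFinset = P.edgeFinset ∧
      Q.verts (Fin.last l) = P.verts (Fin.last l) ∧ m ≤ #(nbhd (H \ Q.edgeFinset) (Q.verts 0)) := by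
  by_cases h0 : m ≤ #(nbhd (H \ P.edgeFinset) (P.verts 0))
  · exact ⟨P, rfl, rfl, h0⟩
  obtain rfl : r = 3 := by
    by_contra
    exact h0 (le_card_nbhd_of_four_le huni hmin (by omega) hm hl P _)
  obtain ⟨j, hj, hgood⟩ := exists_mem_edges_le_card_nbhd huni hmin (by omega) hl P (not_le.1 h0)
  exact ⟨P.rotate j hj, by simp, by simp, by simpa⟩

lemma exists_le_card_nbhd_verts_zero_and_last (huni : ∀ e ∈ H, #e = r)
    (hmin : ∀ v, m.choose (r - 1) ≤ hdeg H v) (hr : 3 ≤ r) (hm : r + 6 ≤ m)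
    (hl : l ≤ 2 * m + 1) (P : BergePath H l) :
    ∃ Q : BergePath H l, m ≤ #(nbhd (H \ Q.edgeFinset) (Q.verts 0)) ∧
      m ≤ #(nbhd (H \ Q.edgeFinset) (Q.verts (Fin.last l))) := by
  obtain ⟨Q₁, -, -, h₁⟩ := exists_le_card_nbhd_verts_zero huni hmin hr hm hl P
  obtain ⟨Q₂, hQ₂, hlast, h₂⟩ := exists_le_card_nbhd_verts_zero huni hmin hr hm hl Q₁.reverse
  refine ⟨Q₂, h₂, ?_⟩
  rwa [hlast, hQ₂, reverse_verts_last, edgeFinset_reverse]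

end BergePath

/-- Let `k ≥ 2r+13 ≥ 18` and let `H'` be an `r`-uniform hypergraph with at
least one hyperedge, no Berge-path of length `k`, and minimum degree at least
`C(⌊(k-1)/2⌋, r-1)`. Then `H'` contains a longest Berge-path `P` both of whose terminal
vertices have at least `⌊(k-1)/2⌋` neighbors in `H'` minus the defining hyperedges of `P`. -/
theorem longest_path_with_large_end_neighborhoods
    {V : Type*} [Fintype V] (r k : ℕ) (hk : 2 * r + 13 ≤ k) (hr : 18 ≤ 2 * r + 13)
    (H' : Finset (Finset V)) (hne : H'.Nonempty)
    (huni : ∀ e ∈ H', e.card = r)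
    (hpath : IsEmpty (BergePath H' k))
    (hdegmin : ∀ v : V, ((k - 1) / 2).choose (r - 1) ≤ hdeg H' v) :
    ∃ (l : ℕ) (P : BergePath H' l),
      (∀ t, Nonempty (BergePath H' t) → t ≤ l) ∧
      (k - 1) / 2 ≤ (nbhd (H'.filter (fun e => ∀ i, e ≠ P.edges i)) (P.verts 0)).card ∧
      (k - 1) / 2 ≤
        (nbhd (H'.filter (fun e => ∀ i, e ≠ P.edges i)) (P.verts (Fin.last l))).card := by
  obtain ⟨e, he⟩ := hne
  obtain ⟨v, -⟩ := card_pos.1 (by rw [huni e he]; omega : 0 < #e)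
  obtain ⟨l, hlk, ⟨P⟩, hmax⟩ := BergePath.exists_longest hpath ⟨BergePath.nil v⟩
  obtain ⟨Q, h₀, hlast⟩ := P.exists_le_card_nbhd_verts_zero_and_last huni hdegmin (by omega)
    (by omega) (by omega)
  exact ⟨l, Q, hmax, Q.filter_forall_ne_edges ▸ h₀, Q.filter_forall_ne_edges ▸ hlast⟩
end

section
/- Under the standing assumptions (k ≥ 2r+13 ≥ 18; n > N_{k,r}; H a connected n-vertex r-graph with no Berge-path of length k and with at least C(⌊(k-1)/2⌋, r-1)·(n − ⌊(k-1)/2⌋) + C(⌊(k-1)/2⌋, r) + [k even]·C(⌊(k-1)/2⌋, r-2) hyperedges; H' the sub-hypergraph obtained from H by repeatedly deleting vertices of degree less than C(⌊(k-1)/2⌋, r-1) together with their incident hyperedges), if H' is isomorphic to H_{v(H'), k}, then H = H'; that is, no vertex is deleted in the process, so v(H) = v(H') and H itself is isomorphic to H_{n,k}. -/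
open scoped Classical

/-!
Each deletion step removes fewer than `D = C(⌊(k-1)/2⌋, r-1)` hyperedges, so after `n - m`
deletions at least `|H| - (D - 1)(n - m)` hyperedges survive on the remaining `m` vertices.
But `H_{m,k}` has at most `extremalCount r k m = extremalCount r k n - D (n - m)` hyperedges,
while `|H| ≥ extremalCount r k n`; hence `n - m = 0`.
-/

variable {V : Type*}

lemma restrictTo_univ [Fintype V] (H : Finset (Finset V)) : restrictTo H Finset.univ = H :=
  Finset.filter_true_of_mem fun e _ => Finset.subset_univ e

lemma card_restrictTo_le_card_restrictTo_erase_add_hdeg (H : Finset (Finset V))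
    (S : Finset V) (v : V) :
    (restrictTo H S).card ≤ (restrictTo H (S.erase v)).card + hdeg (restrictTo H S) v := by
  rw [← Finset.card_filter_add_card_filter_not (s := restrictTo H S) (fun e => v ∉ e), hdeg]
  simp only [not_not]
  gcongr
  intro e he
  simp only [restrictTo, Finset.mem_filter] at he ⊢
  exact ⟨he.1.1, fun x hx => Finset.mem_erase.2 ⟨fun h => he.2 (h ▸ hx), he.1.2 hx⟩⟩

namespace DelProcess

variable {H : Finset (Finset V)} {D : ℕ} {S T : Finset V}

lemma subset (h : DelProcess H D S T) : T ⊆ S := by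
  induction h with
  | refl S => exact subset_rfl
  | step S _ v _ _ _ ih => exact ih.trans (Finset.erase_subset v S)

lemma card_restrictTo_add_le (h : DelProcess H D S T) :
    (restrictTo H S).card + (S.card - T.card) ≤
      (restrictTo H T).card + D * (S.card - T.card) := by
  induction h with
  | refl S => simp
  | step S T v hv hd h ih =>
    have hstep := card_restrictTo_le_card_restrictTo_erase_add_hdeg H S v
    have hT : T.card ≤ (S.erase v).card := Finset.card_le_card h.subset
    have hcount : S.card - T.card = (S.erase v).card - T.card + 1 := by
      rw [Finset.card_erase_of_mem hv] at hT ⊢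
      have := Finset.card_pos.2 ⟨v, hv⟩
      omega
    rw [hcount, mul_add_one]
    omega

end DelProcess

lemma card_hnkFamilyOdd_le (r : ℕ) (S A : Finset V) :
    (HnkFamilyOdd r S A).card ≤
      A.card.choose r + (S \ A).card * A.card.choose (r - 1) := by
  have hsub : HnkFamilyOdd r S A ⊆ A.powersetCard r ∪
      (S \ A).biUnion fun b => (A.powersetCard (r - 1)).image (insert b) := by
    intro s hs
    simp only [HnkFamilyOdd, Finset.mem_filter, Finset.mem_powerset] at hs
    obtain ⟨hsS, hcard, hout⟩ := hs
    rcases Nat.le_one_iff_eq_zero_or_eq_one.1 hout with hin | hone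
    · refine Finset.mem_union_left _ (Finset.mem_powersetCard.2 ⟨?_, hcard⟩)
      rwa [Finset.card_eq_zero, Finset.sdiff_eq_empty_iff_subset] at hin
    · obtain ⟨b, hb⟩ := Finset.card_eq_one.1 hone
      have hbs : b ∈ s ∧ b ∉ A := Finset.mem_sdiff.1 (hb ▸ Finset.mem_singleton_self b)
      refine Finset.mem_union_right _ (Finset.mem_biUnion.2
        ⟨b, Finset.mem_sdiff.2 ⟨hsS hbs.1, hbs.2⟩, Finset.mem_image.2
          ⟨s.erase b, Finset.mem_powersetCard.2 ⟨?_, ?_⟩, Finset.insert_erase hbs.1⟩⟩)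
      · intro x hx
        by_contra hxA
        have : x ∈ s \ A := Finset.mem_sdiff.2 ⟨Finset.mem_of_mem_erase hx, hxA⟩
        rw [hb, Finset.mem_singleton] at this
        exact Finset.notMem_erase b s (this ▸ hx)
      · rw [Finset.card_erase_of_mem hbs.1, hcard]
  calc (HnkFamilyOdd r S A).card
      ≤ A.card.choose r + ∑ _b ∈ S \ A, A.card.choose (r - 1) := by
        refine (Finset.card_le_card hsub).trans ((Finset.card_union_le _ _).trans ?_)
        rw [Finset.card_powersetCard]
        gcongr
        refine Finset.card_biUnion_le.trans (Finset.sum_le_sum fun b _ => ?_)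
        exact Finset.card_powersetCard (r - 1) A ▸ Finset.card_image_le
    _ = A.card.choose r + (S \ A).card * A.card.choose (r - 1) := by
        rw [Finset.sum_const, smul_eq_mul]

lemma card_hnkFamilyEven_le (r : ℕ) (S A : Finset V) (b1 b2 : V) :
    (HnkFamilyEven r S A b1 b2).card ≤
      A.card.choose r + (S \ A).card * A.card.choose (r - 1) + A.card.choose (r - 2) := by
  have hsub : HnkFamilyEven r S A b1 b2 ⊆
      HnkFamilyOdd r S A ∪ (A.powersetCard (r - 2)).image ({b1, b2} ∪ ·) := by
    intro s hs
    simp only [HnkFamilyEven, Finset.mem_filter] at hs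
    obtain ⟨hsS, hcard, hcases⟩ := hs
    by_cases hout : (s \ A).card ≤ 1
    · exact Finset.mem_union_left _ (Finset.mem_filter.2 ⟨hsS, hcard, hout⟩)
    have hpair := hcases.resolve_left hout
    have htwo : (s \ A).card = 2 := by
      have := Finset.card_le_two (a := b1) (b := b2)
      rw [← hpair] at this
      omega
    refine Finset.mem_union_right _ (Finset.mem_image.2
      ⟨s ∩ A, Finset.mem_powersetCard.2 ⟨Finset.inter_subset_right, ?_⟩, ?_⟩)
    · have := Finset.card_sdiff_add_card_inter s A
      omega
    · rw [← hpair, Finset.sdiff_union_inter]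
  calc (HnkFamilyEven r S A b1 b2).card
      ≤ (HnkFamilyOdd r S A).card + A.card.choose (r - 2) := by
        refine (Finset.card_le_card hsub).trans ((Finset.card_union_le _ _).trans ?_)
        gcongr
        exact Finset.card_powersetCard (r - 2) A ▸ Finset.card_image_le
    _ ≤ _ := by
        gcongr
        exact card_hnkFamilyOdd_le r S A

namespace IsHnkOn

variable {r k : ℕ} {S : Finset V} {H : Finset (Finset V)}

lemma le_card (h : IsHnkOn r k S H) : (k - 1) / 2 ≤ S.card := by
  obtain ⟨A, hAS, hA, -⟩ := h
  exact hA ▸ Finset.card_le_card hAS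

lemma card_le (h : IsHnkOn r k S H) : H.card ≤ extremalCount r k S.card := by
  obtain ⟨A, hAS, hA, ⟨hodd, rfl⟩ | ⟨heven, b1, -, b2, -, -, rfl⟩⟩ := h
  · have hbound := card_hnkFamilyOdd_le r S A
    rw [Finset.card_sdiff_of_subset hAS, hA] at hbound
    rw [extremalCount, if_neg (Nat.not_even_iff_odd.2 hodd ∘ even_iff_two_dvd.2)]
    linarith [mul_comm (S.card - (k - 1) / 2) (((k - 1) / 2).choose (r - 1))]
  · have hbound := card_hnkFamilyEven_le r S A b1 b2
    rw [Finset.card_sdiff_of_subset hAS, hA] at hbound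
    rw [extremalCount, if_pos heven.two_dvd]
    linarith [mul_comm (S.card - (k - 1) / 2) (((k - 1) / 2).choose (r - 1))]

end IsHnkOn

lemma extremalCount_eq_add {r k m n : ℕ} (hm : (k - 1) / 2 ≤ m) (hmn : m ≤ n) :
    extremalCount r k n = extremalCount r k m + ((k - 1) / 2).choose (r - 1) * (n - m) := by
  have hsplit : n - (k - 1) / 2 = m - (k - 1) / 2 + (n - m) := by omega
  simp only [extremalCount, hsplit]
  ring

theorem DelProcess.eq_univ_of_isHnkOn [Fintype V] {r k : ℕ} {H : Finset (Finset V)}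
    {S : Finset V} (hcard : extremalCount r k (Fintype.card V) ≤ H.card)
    (hS : DelProcess H (((k - 1) / 2).choose (r - 1)) Finset.univ S)
    (hiso : IsHnkOn r k S (restrictTo H S)) : S = Finset.univ := by
  have hdel := hS.card_restrictTo_add_le
  rw [restrictTo_univ, Finset.card_univ] at hdel
  rw [extremalCount_eq_add hiso.le_card (Finset.card_le_univ S)] at hcard
  have := hiso.card_le
  have := Finset.card_le_univ S
  exact Finset.eq_univ_of_card S (by omega)

theorem residual_Hnk_implies_whole_general
    (r k n : ℕ)
    (H : Finset (Finset (Fin n)))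
    (hcard : extremalCount r k n ≤ H.card)
    (S : Finset (Fin n))
    (hS : DelProcess H (((k - 1) / 2).choose (r - 1)) Finset.univ S)
    (hiso : IsHnkOn r k S (restrictTo H S)) :
    restrictTo H S = H ∧ S = (Finset.univ : Finset (Fin n)) ∧
      IsHnkOn r k (Finset.univ : Finset (Fin n)) H := by
  obtain rfl : S = Finset.univ :=
    DelProcess.eq_univ_of_isHnkOn (by rwa [Fintype.card_fin]) hS hiso
  rw [restrictTo_univ] at hiso ⊢
  exact ⟨rfl, rfl, hiso⟩

/-- Under the standing assumptions, if `H'` is (isomorphic to)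
`H_{v(H'),k}`, then no vertex was deleted: `H = H'`, `v(H) = v(H')`, and `H` itself is
(isomorphic to) `H_{n,k}`. -/
theorem residual_Hnk_implies_whole
    (r k n : ℕ) (hk : 2 * r + 13 ≤ k) (hr : 18 ≤ 2 * r + 13) (hn : Nkr r k < n)
    (H : Finset (Finset (Fin n))) (huni : ∀ e ∈ H, e.card = r)
    (hconn : HConnected H) (hpath : IsEmpty (BergePath H k))
    (hcard : extremalCount r k n ≤ H.card)
    (S : Finset (Fin n))
    (hS : DelProcess H (((k - 1) / 2).choose (r - 1)) Finset.univ S)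
    (hterm : ∀ v ∈ S, ((k - 1) / 2).choose (r - 1) ≤ hdeg (restrictTo H S) v)
    (hiso : IsHnkOn r k S (restrictTo H S)) :
    restrictTo H S = H ∧ S = (Finset.univ : Finset (Fin n)) ∧
      IsHnkOn r k (Finset.univ : Finset (Fin n)) H :=
  residual_Hnk_implies_whole_general r k n H hcard S hS hiso
end

section
/- For all integers n and k with n ≥ k ≥ 1, every simple graph on n vertices containing no path of length k has at most (k−1)n/2 edges. -/
open scoped Classical

/-! Induct on the vertex set. A vertex of degree less than `k / 2` can be deleted. Otherwise
take a longest path `v₀ … v_l`, so `l < k`. All neighbours of `v₀` and `v_l` lie on the path, and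
since `deg v₀ + deg v_l ≥ k > l` there is an `i` with `v₀ ~ v_{i+1}` and `v_l ~ v_i`. Hence the
path's vertices span a cycle, and a neighbour off the path would give a longer path. So these at
most `k` vertices form a union of components, which carries at most `k - 1` edge ends per vertex. -/

namespace ErdosGallai

open Finset

variable {V : Type*} (G : SimpleGraph V)

/-- `f 0, f 1, …, f l` is a path of `G` through vertices of `s`; values of `f` beyond `l`
are irrelevant. -/
structure IsPathSeq (s : Finset V) (l : ℕ) (f : ℕ → V) : Prop where
  mem : ∀ i ≤ l, f i ∈ s
  injOn : ∀ i ≤ l, ∀ j ≤ l, f i = f j → i = j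
  adj : ∀ i < l, G.Adj (f i) (f (i + 1))

noncomputable def degWithin (s : Finset V) (v : V) : ℕ := #{w ∈ s | G.Adj v w}

/-- Twice the number of edges of the induced subgraph `G[s]`. -/
noncomputable def degSum (s : Finset V) : ℕ := ∑ v ∈ s, degWithin G s v

namespace IsPathSeq

variable {G} {s : Finset V} {l : ℕ} {f : ℕ → V}

lemma single {v : V} (hv : v ∈ s) : IsPathSeq G s 0 (fun _ => v) where
  mem _ _ := hv
  injOn _ hi _ hj _ := by omega
  adj _ hi := absurd hi (Nat.not_lt_zero _)

lemma mono (hf : IsPathSeq G s l f) {t : Finset V} (hst : s ⊆ t) : IsPathSeq G t l f where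
  mem i hi := hst (hf.mem i hi)
  injOn := hf.injOn
  adj := hf.adj

lemma take (hf : IsPathSeq G s l f) {m : ℕ} (hm : m ≤ l) : IsPathSeq G s m f where
  mem i hi := hf.mem i (hi.trans hm)
  injOn i hi j hj := hf.injOn i (hi.trans hm) j (hj.trans hm)
  adj i hi := hf.adj i (by omega)

lemma adj_of_eq_succ (hf : IsPathSeq G s l f) {p q : ℕ} (hq : q = p + 1) (hql : q ≤ l) :
    G.Adj (f p) (f q) := by
  subst hq
  exact hf.adj p hql

lemma comp (hf : IsPathSeq G s l f) {σ : ℕ → ℕ} (hσ : ∀ j ≤ l, σ j ≤ l)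
    (hσinj : ∀ i ≤ l, ∀ j ≤ l, σ i = σ j → i = j)
    (hadj : ∀ j < l, G.Adj (f (σ j)) (f (σ (j + 1)))) : IsPathSeq G s l (f ∘ σ) where
  mem j hj := hf.mem _ (hσ j hj)
  injOn i hi j hj h := hσinj i hi j hj (hf.injOn _ (hσ i hi) _ (hσ j hj) h)
  adj := hadj

lemma reverse (hf : IsPathSeq G s l f) : IsPathSeq G s l (fun j => f (l - j)) :=
  hf.comp (σ := fun j => l - j) (fun _ _ => by omega) (fun _ _ _ _ _ => by omega)
    fun _ _ => (hf.adj_of_eq_succ (by omega) (by omega)).symm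

lemma snoc (hf : IsPathSeq G s l f) {w : V} (hw : w ∈ s) (hfresh : ∀ j ≤ l, f j ≠ w)
    (hadj : G.Adj (f l) w) : IsPathSeq G s (l + 1) (fun j => if j ≤ l then f j else w) where
  mem j _ := by
    split_ifs with hj
    exacts [hf.mem j hj, hw]
  injOn i _ j _ h := by
    split_ifs at h with hi hj hj
    · exact hf.injOn i hi j hj h
    · exact absurd h (hfresh i hi)
    · exact absurd h.symm (hfresh j hj)
    · omega
  adj j hj := by
    rcases Nat.lt_or_eq_of_le (Nat.le_of_lt_succ hj) with hj | rfl
    · simpa [hj.le, Nat.succ_le_of_lt hj] using hf.adj j hj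
    · simpa using hadj

lemma exists_walk (hf : IsPathSeq G s l f) :
    ∃ p : G.Walk (f 0) (f l), p.IsPath ∧ p.length = l ∧ ∀ x ∈ p.support, ∃ j ≤ l, f j = x := by
  induction l with
  | zero => exact ⟨.nil, .nil, rfl, by simp⟩
  | succ l ih =>
    obtain ⟨p, hp, hlen, hsupp⟩ := ih (hf.take l.le_succ)
    have hnew : f (l + 1) ∉ p.support := fun h => by
      obtain ⟨j, hj, hfj⟩ := hsupp _ h
      have := hf.injOn j (by omega) (l + 1) le_rfl hfj
      omega
    refine ⟨p.concat (hf.adj l l.lt_succ_self), hp.concat hnew _, by simp [hlen], fun x hx => ?_⟩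
    rw [SimpleGraph.Walk.support_concat, List.mem_append, List.mem_singleton] at hx
    rcases hx with hx | rfl
    · obtain ⟨j, hj, rfl⟩ := hsupp x hx
      exact ⟨j, by omega, rfl⟩
    · exact ⟨l + 1, le_rfl, rfl⟩

section Longest

variable (hf : IsPathSeq G s l f) (hmax : ∀ g, ¬ IsPathSeq G s (l + 1) g)
include hf hmax

lemma exists_eq_of_adj_last {w : V} (hw : w ∈ s) (hadj : G.Adj (f l) w) :
    ∃ j < l, f j = w := by
  by_contra! hoff
  refine hmax _ (hf.snoc hw (fun j hj hfj => ?_) hadj)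
  rcases hj.lt_or_eq with hj | rfl
  · exact hoff j hj hfj
  · exact G.ne_of_adj hadj hfj

lemma exists_eq_of_adj_first {w : V} (hw : w ∈ s) (hadj : G.Adj (f 0) w) :
    ∃ j < l, f (j + 1) = w := by
  obtain ⟨j, hj, hfj⟩ := hf.reverse.exists_eq_of_adj_last hmax hw (by simpa using hadj)
  exact ⟨l - j - 1, by omega, by rw [← hfj, show l - j - 1 + 1 = l - j by omega]⟩

lemma degWithin_last_le : degWithin G s (f l) ≤ #{j ∈ range l | G.Adj (f l) (f j)} := by
  refine (card_le_card (t := image f {j ∈ range l | G.Adj (f l) (f j)}) fun w hw => ?_).trans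
    card_image_le
  obtain ⟨hws, hadj⟩ := mem_filter.1 hw
  obtain ⟨j, hj, rfl⟩ := hf.exists_eq_of_adj_last hmax hws hadj
  exact mem_image_of_mem f (mem_filter.2 ⟨mem_range.2 hj, hadj⟩)

lemma degWithin_first_le :
    degWithin G s (f 0) ≤ #{j ∈ range l | G.Adj (f 0) (f (j + 1))} := by
  refine (card_le_card (t := image (fun j => f (j + 1)) {j ∈ range l | G.Adj (f 0) (f (j + 1))})
    fun w hw => ?_).trans card_image_le
  obtain ⟨hws, hadj⟩ := mem_filter.1 hw
  obtain ⟨j, hj, rfl⟩ := hf.exists_eq_of_adj_first hmax hws hadj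
  exact mem_image_of_mem (fun j => f (j + 1)) (mem_filter.2 ⟨mem_range.2 hj, hadj⟩)

lemma exists_crossing_chords (hdeg : l < degWithin G s (f 0) + degWithin G s (f l)) :
    ∃ i < l, G.Adj (f 0) (f (i + 1)) ∧ G.Adj (f l) (f i) := by
  have hcard := add_le_add (hf.degWithin_first_le hmax) (hf.degWithin_last_le hmax)
  obtain ⟨i, hi⟩ := inter_nonempty_of_card_lt_card_add_card
    (filter_subset (fun j => G.Adj (f 0) (f (j + 1))) (range l))
    (filter_subset (fun j => G.Adj (f l) (f j)) _) (by rw [card_range]; omega)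
  simp only [mem_inter, mem_filter, mem_range] at hi
  exact ⟨i, hi.1.1, hi.1.2, hi.2.2⟩

end Longest

lemma rotate (hf : IsPathSeq G s l f) (hclose : G.Adj (f l) (f 0)) {a : ℕ} (ha : a ≤ l) :
    IsPathSeq G s l (f ∘ fun j => if a + 1 + j ≤ l then a + 1 + j else a + j - l) :=
  hf.comp (fun j _ => by split_ifs <;> omega) (fun i _ j _ h => by split_ifs at h <;> omega)
    fun j hj => by
      split_ifs with h₁ h₂ h₂
      · exact hf.adj_of_eq_succ (by omega) (by omega)
      · rwa [show a + 1 + j = l by omega, show a + (j + 1) - l = 0 by omega]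
      · omega
      · exact hf.adj_of_eq_succ (by omega) (by omega)

/-- The path `f 0 … f i, f l, f (l - 1) … f (i + 1)` closes up through the chord `f (i + 1) f 0`
into a cycle on the same vertices, which can be opened so as to end at any prescribed vertex. -/
lemma exists_reindex_ending_at (hf : IsPathSeq G s l f) {i : ℕ} (hi : i < l)
    (h₀ : G.Adj (f 0) (f (i + 1))) (hₗ : G.Adj (f l) (f i)) {a : ℕ} (ha : a ≤ l) :
    ∃ σ : ℕ → ℕ, (∀ j ≤ l, σ j ≤ l) ∧ σ l = a ∧ IsPathSeq G s l (f ∘ σ) := by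
  obtain ⟨τ, hτ⟩ : ∃ τ : ℕ → ℕ, ∀ j, τ j = if j ≤ i then j else l + i + 1 - j := ⟨_, fun _ => rfl⟩
  have hcycle : IsPathSeq G s l (f ∘ τ) :=
    hf.comp (fun j _ => by rw [hτ]; split_ifs <;> omega)
      (fun _ _ _ _ h => by rw [hτ, hτ] at h; split_ifs at h <;> omega)
      fun j hj => by
        rw [hτ, hτ]
        split_ifs with h₁ h₂ h₂
        · exact hf.adj_of_eq_succ (by omega) (by omega)
        · rwa [show j = i by omega, show l + i + 1 - (i + 1) = l by omega, G.adj_comm]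
        · omega
        · exact (hf.adj_of_eq_succ (by omega) (by omega)).symm
  have hclose : G.Adj ((f ∘ τ) l) ((f ∘ τ) 0) := by
    simpa [hτ, show ¬ l ≤ i by omega, show l + i + 1 - l = i + 1 by omega] using h₀.symm
  have hτa : τ a ≤ l := by rw [hτ]; split_ifs <;> omega
  refine ⟨_, fun j _ => ?_, ?_, hcycle.rotate hclose hτa⟩
  · simp only [hτ]
    split_ifs <;> omega
  · simp only [hτ]
    split_ifs <;> omega

lemma exists_eq_of_adj (hf : IsPathSeq G s l f) (hmax : ∀ g, ¬ IsPathSeq G s (l + 1) g)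
    (hdeg : l < degWithin G s (f 0) + degWithin G s (f l)) {a : ℕ} (ha : a ≤ l) {w : V}
    (hw : w ∈ s) (hadj : G.Adj (f a) w) : ∃ j ≤ l, f j = w := by
  obtain ⟨i, hi, h₀, hₗ⟩ := hf.exists_crossing_chords hmax hdeg
  obtain ⟨σ, hσ, hσl, hfσ⟩ := hf.exists_reindex_ending_at hi h₀ hₗ ha
  by_contra! hoff
  exact hmax _ (hfσ.snoc hw (fun j hj => hoff _ (hσ j hj)) (by simpa [hσl] using hadj))

end IsPathSeq

section DegreeSum

variable {G}

lemma degWithin_le_card_sub_one {s : Finset V} {v : V} (hv : v ∈ s) :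
    degWithin G s v ≤ #s - 1 := by
  rw [← card_erase_of_mem hv]
  refine card_le_card fun w hw => ?_
  obtain ⟨hws, hadj⟩ := mem_filter.1 hw
  exact mem_erase.2 ⟨hadj.ne', hws⟩

lemma degSum_le_of_card_le {s : Finset V} {k : ℕ} (hs : #s ≤ k) : degSum G s ≤ (k - 1) * #s :=
  calc degSum G s ≤ #s * (#s - 1) := by
        simpa [degSum] using sum_le_card_nsmul s _ _ fun v hv => degWithin_le_card_sub_one hv
    _ ≤ (k - 1) * #s := by
        rw [mul_comm]
        gcongr

lemma degWithin_eq_erase_add {s : Finset V} {u v : V} (hv : v ∈ s) :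
    degWithin G s u = degWithin G (s.erase v) u + if G.Adj u v then 1 else 0 := by
  conv_lhs => rw [degWithin, ← insert_erase hv, filter_insert]
  split_ifs
  · exact card_insert_of_notMem fun hmem => notMem_erase v s (mem_filter.1 hmem).1
  · rfl

lemma degSum_erase {s : Finset V} {v : V} (hv : v ∈ s) :
    degSum G s = degSum G (s.erase v) + 2 * degWithin G s v := by
  have hback : #{u ∈ s.erase v | G.Adj u v} = degWithin G s v := by
    rw [degWithin]
    congr 1
    ext u
    simp only [mem_filter, mem_erase]
    exact ⟨fun ⟨⟨_, hu⟩, h⟩ => ⟨hu, h.symm⟩, fun ⟨hu, h⟩ => ⟨⟨h.ne', hu⟩, h.symm⟩⟩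
  calc degSum G s = degWithin G s v + ∑ u ∈ s.erase v, degWithin G s u := by
        rw [degSum, add_sum_erase s _ hv]
    _ = degWithin G s v + (degSum G (s.erase v) + #{u ∈ s.erase v | G.Adj u v}) := by
        rw [sum_congr rfl fun u _ => degWithin_eq_erase_add hv, sum_add_distrib, card_filter,
          degSum]
    _ = degSum G (s.erase v) + 2 * degWithin G s v := by
        rw [hback]
        ring

lemma degSum_of_closed {s t : Finset V} (hts : t ⊆ s)
    (hclosed : ∀ u ∈ t, ∀ w ∈ s, G.Adj u w → w ∈ t) :
    degSum G s = degSum G t + degSum G (s \ t) := by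
  have hin : ∀ u ∈ t, degWithin G s u = degWithin G t u := fun u hu => by
    unfold degWithin
    congr 1
    ext w
    simp only [mem_filter]
    exact ⟨fun ⟨hw, h⟩ => ⟨hclosed u hu w hw h, h⟩, fun ⟨hw, h⟩ => ⟨hts hw, h⟩⟩
  have hout : ∀ u ∈ s \ t, degWithin G s u = degWithin G (s \ t) u := fun u hu => by
    rw [mem_sdiff] at hu
    unfold degWithin
    congr 1
    ext w
    simp only [mem_filter, mem_sdiff]
    exact ⟨fun ⟨hw, h⟩ => ⟨⟨hw, fun hwt => hu.2 (hclosed w hwt u hu.1 h.symm)⟩, h⟩,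
      fun ⟨hw, h⟩ => ⟨hw.1, h⟩⟩
  rw [degSum, ← sum_sdiff hts, sum_congr rfl hout, sum_congr rfl hin, add_comm]
  rfl

end DegreeSum

lemma exists_closed_card_le {s : Finset V} {k : ℕ} (hs : s.Nonempty)
    (hpath : ∀ l f, IsPathSeq G s l f → l < k) (hdeg : ∀ v ∈ s, k ≤ 2 * degWithin G s v) :
    ∃ t ⊆ s, t.Nonempty ∧ #t ≤ k ∧ ∀ u ∈ t, ∀ w ∈ s, G.Adj u w → w ∈ t := by
  obtain ⟨v, hv⟩ := hs
  set l := Nat.findGreatest (fun l => ∃ f, IsPathSeq G s l f) k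
  obtain ⟨f, hf⟩ : ∃ f, IsPathSeq G s l f :=
    Nat.findGreatest_spec (P := fun l => ∃ f, IsPathSeq G s l f) (Nat.zero_le k)
      ⟨_, IsPathSeq.single hv⟩
  have hlk := hpath l f hf
  have hmax : ∀ g, ¬ IsPathSeq G s (l + 1) g := fun g hg => by
    have := Nat.le_findGreatest (P := fun l => ∃ f, IsPathSeq G s l f) (by omega : l + 1 ≤ k)
      ⟨g, hg⟩
    omega
  have hends := add_le_add (hdeg _ (hf.mem 0 (Nat.zero_le l))) (hdeg _ (hf.mem l le_rfl))
  refine ⟨image f (range (l + 1)), fun u hu => ?_, ⟨f 0, mem_image_of_mem f (by simp)⟩,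
    card_image_le.trans (by rw [card_range]; omega), fun u hu w hw hadj => ?_⟩
  · obtain ⟨j, hj, rfl⟩ := mem_image.1 hu
    exact hf.mem j (by simpa [Nat.lt_succ_iff] using hj)
  · obtain ⟨a, ha, rfl⟩ := mem_image.1 hu
    obtain ⟨j, hj, rfl⟩ :=
      hf.exists_eq_of_adj hmax (by omega) (by simpa [Nat.lt_succ_iff] using ha) hw hadj
    exact mem_image_of_mem f (by simpa [Nat.lt_succ_iff] using hj)

theorem degSum_le_of_forall_length_lt {k : ℕ} (s : Finset V)
    (hpath : ∀ l f, IsPathSeq G s l f → l < k) : degSum G s ≤ (k - 1) * #s := by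
  induction s using Finset.strongInduction with
  | H s ih =>
  obtain rfl | hs := s.eq_empty_or_nonempty
  · simp [degSum]
  by_cases hlow : ∃ v ∈ s, 2 * degWithin G s v < k
  · obtain ⟨v, hv, hdeg⟩ := hlow
    have hrest := ih _ (erase_ssubset hv) fun l f hf => hpath l f (hf.mono (erase_subset v s))
    obtain ⟨m, hm⟩ : ∃ m, #s = m + 1 := ⟨_, (Nat.succ_pred_eq_of_pos hs.card_pos).symm⟩
    rw [card_erase_of_mem hv, hm, Nat.add_sub_cancel] at hrest
    rw [degSum_erase hv, hm, mul_add_one]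
    omega
  · push Not at hlow
    obtain ⟨t, hts, ht, htk, hclosed⟩ := exists_closed_card_le G hs hpath hlow
    have hrest := ih _ (sdiff_ssubset hts ht) fun l f hf => hpath l f (hf.mono sdiff_subset)
    calc degSum G s = degSum G t + degSum G (s \ t) := degSum_of_closed hts hclosed
      _ ≤ (k - 1) * #t + (k - 1) * #(s \ t) := add_le_add (degSum_le_of_card_le htk) hrest
      _ = (k - 1) * #s := by rw [← mul_add, add_comm, card_sdiff_add_card_eq_card hts]

end ErdosGallai

theorem erdos_gallai_path_general
    (n k : ℕ) (G : SimpleGraph (Fin n)) [DecidableRel G.Adj]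
    (hpath : ¬ ∃ (u v : Fin n) (p : G.Walk u v), p.IsPath ∧ p.length = k) :
    2 * G.edgeFinset.card ≤ (k - 1) * n := by
  have hshort : ∀ l f, ErdosGallai.IsPathSeq G Finset.univ l f → l < k := fun l f hf => by
    by_contra! hkl
    obtain ⟨p, hp, hlen, -⟩ := (hf.take hkl).exists_walk
    exact hpath ⟨_, _, p, hp, hlen⟩
  calc 2 * G.edgeFinset.card = ∑ v, G.degree v := G.sum_degrees_eq_twice_card_edges.symm
    _ = ErdosGallai.degSum G Finset.univ := Finset.sum_congr rfl fun v _ => by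
        rw [← G.card_neighborFinset_eq_degree, ErdosGallai.degWithin]
        congr 1
        ext w
        simp
    _ ≤ (k - 1) * n := by simpa using ErdosGallai.degSum_le_of_forall_length_lt G Finset.univ hshort

/-- Erdős–Gallai. For `n ≥ k ≥ 1`, every simple graph on `n` vertices
with no path of length `k` has at most `(k−1)n/2` edges. -/
theorem erdos_gallai_path
    (n k : ℕ) (hk : 1 ≤ k) (hkn : k ≤ n) (G : SimpleGraph (Fin n)) [DecidableRel G.Adj]
    (hpath : ¬ ∃ (u v : Fin n) (p : G.Walk u v), p.IsPath ∧ p.length = k) :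
    2 * G.edgeFinset.card ≤ (k - 1) * n :=
  erdos_gallai_path_general n k G hpath
end

section
/- For all integers n and r with r ≥ 3, every r-uniform hypergraph on n vertices containing no Berge-path of length r+1 has at most n hyperedges (i.e., the upper bound (n/k)·C(k,r) with k = r+1 holds in the case k = r+1 as well). -/
open scoped Classical

/-!
We prove the stronger bound `|F| ≤ |V(F)|`, where `V(F)` is the set of vertices covered by `F`.
In a minimal counterexample `F` every proper subfamily `G` has `|G| ≤ |V(G)|`, while
`|F| > |V(F)|`. Hence `F` is connected, has at least `r + 2` vertices, and Hall's condition holds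
for `F` minus one edge; the resulting system of distinct representatives covers `V(F)`, so every
vertex `v` owns an edge `M v ∋ v`, distinct vertices owning distinct edges. In the digraph
`v → M v` every out-neighbourhood has `r` vertices, so the end of a maximal path closes a cycle
of length at least `r`, which is a Berge-cycle with owned edges. A Berge-cycle of length `r + 1`
in a connected hypergraph with more vertices extends to a Berge-path of length `r + 1`, a longer
one contains such a path, and a Berge-cycle of length `r` together with the edge owned by a
vertex that sticks out of it yields a Berge-path or a Berge-cycle of length `r + 1`.
-/

open Finset Function

variable {V : Type*} {F G : Finset (Finset V)} {r t : ℕ}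

lemma Fin.mk_add_one_mod {t : ℕ} (i : Fin (t + 1)) :
    (⟨(i.val + 1) % (t + 1), Nat.mod_lt _ (Nat.succ_pos t)⟩ : Fin (t + 1)) = i + 1 := by
  ext
  simp [Fin.val_add]

lemma Finset.mem_or_mem_of_subset_of_card_le {s u : Finset V} {a b : V} (hsu : s ⊆ u)
    (hcard : #u ≤ #s + 1) (ha : a ∈ u) (hb : b ∈ u) (hab : a ≠ b) : a ∈ s ∨ b ∈ s := by
  by_contra! h
  have hdisj : Disjoint s {a, b} := by simp [h.1, h.2]
  have : s ∪ {a, b} ⊆ u := union_subset hsu (by simp [insert_subset_iff, ha, hb])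
  have := card_le_card this
  rw [card_union_of_disjoint hdisj, card_pair hab] at this
  omega

namespace BergePath

def mono (hFG : F ⊆ G) (P : BergePath F t) : BergePath G t :=
  { P with edges_mem := fun i => hFG (P.edges_mem i) }

def take (P : BergePath F t) {k : ℕ} (hk : k ≤ t) : BergePath F k where
  verts := P.verts ∘ Fin.castLE (by omega)
  edges := P.edges ∘ Fin.castLE hk
  verts_inj := P.verts_inj.comp (Fin.castLE_injective _)
  edges_inj := P.edges_inj.comp (Fin.castLE_injective _)
  edges_mem _ := P.edges_mem _
  fst_mem i := by simpa using P.fst_mem (Fin.castLE hk i)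
  snd_mem i := by simpa using P.snd_mem (Fin.castLE hk i)

@[simps]
def cons (P : BergePath F t) (u : V) (e : Finset V) (he : e ∈ F) (hu : u ∈ e)
    (h0 : P.verts 0 ∈ e) (hu' : u ∉ Set.range P.verts) (he' : e ∉ Set.range P.edges) :
    BergePath F (t + 1) where
  verts := Fin.cons u P.verts
  edges := Fin.cons e P.edges
  verts_inj := Fin.cons_injective_iff.2 ⟨hu', P.verts_inj⟩
  edges_inj := Fin.cons_injective_iff.2 ⟨he', P.edges_inj⟩
  edges_mem := Fin.cases he P.edges_mem
  fst_mem := Fin.cases (by simpa using hu) fun i => by simpa using P.fst_mem i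
  snd_mem := Fin.cases (by simpa using h0) fun i => by simpa using P.snd_mem i

section cons
variable (P : BergePath F t) (u : V) (e : Finset V) (he : e ∈ F) (hu : u ∈ e)
  (h0 : P.verts 0 ∈ e) (hu' : u ∉ Set.range P.verts) (he' : e ∉ Set.range P.edges)

lemma range_cons_verts :
    Set.range (P.cons u e he hu h0 hu' he').verts = insert u (Set.range P.verts) :=
  Fin.range_cons _ _

lemma range_cons_edges :
    Set.range (P.cons u e he hu h0 hu' he').edges = insert e (Set.range P.edges) :=
  Fin.range_cons _ _

end cons

def close (P : BergePath F t) (e : Finset V) (he : e ∈ F) (he' : e ∉ Set.range P.edges)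
    (h0 : P.verts 0 ∈ e) (hlast : P.verts (Fin.last t) ∈ e) : BergeCycle F (t + 1) where
  verts := P.verts
  edges := Fin.snoc P.edges e
  verts_inj := P.verts_inj
  edges_inj := Fin.snoc_injective_iff.2 ⟨P.edges_inj, he'⟩
  edges_mem := Fin.lastCases (by simpa using he) fun i => by simpa using P.edges_mem i
  fst_mem := Fin.lastCases (by simpa using hlast) fun i => by simpa using P.fst_mem i
  snd_mem i := by
    rw [Fin.mk_add_one_mod]
    induction i using Fin.lastCases with
    | last => simpa using h0
    | cast i => simpa [Fin.coeSucc_eq_succ] using P.snd_mem i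

lemma nonempty_bergeCycle_of_mem (P : BergePath F t) {w : V} {e₁ e₂ : Finset V}
    (he₁ : e₁ ∈ F) (he₂ : e₂ ∈ F) (hne : e₁ ≠ e₂) (hw : w ∉ Set.range P.verts) (he₁P : e₁ ∉ Set.range P.edges)
    (he₂P : e₂ ∉ Set.range P.edges) (hw₁ : w ∈ e₁) (hw₂ : w ∈ e₂) (h₀ : P.verts 0 ∈ e₁)
    (hlast : P.verts (Fin.last t) ∈ e₂) : Nonempty (BergeCycle F (t + 2)) := by
  refine ⟨(P.cons w e₁ he₁ hw₁ h₀ hw he₁P).close e₂ he₂ ?_ (by simpa using hw₂)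
    (by simpa using hlast)⟩
  rw [range_cons_edges, Set.mem_insert_iff, not_or]
  exact ⟨hne.symm, he₂P⟩

end BergePath

namespace BergeCycle

lemma snd_mem_add_one (c : BergeCycle F (t + 1)) (i : Fin (t + 1)) :
    c.verts (i + 1) ∈ c.edges i := by
  simpa [Fin.mk_add_one_mod] using c.snd_mem i

@[simps]
def eraseEdge (c : BergeCycle F (t + 1)) (j : Fin (t + 1)) : BergePath F t where
  verts i := c.verts (j + 1 + i)
  edges i := c.edges (j + 1 + i.castSucc)
  verts_inj _ _ h := add_left_cancel (c.verts_inj h)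
  edges_inj _ _ h := Fin.castSucc_injective _ (add_left_cancel (c.edges_inj h))
  edges_mem _ := c.edges_mem _
  fst_mem _ := c.fst_mem _
  snd_mem i := by
    simpa [← Fin.coeSucc_eq_succ, add_assoc] using c.snd_mem_add_one (j + 1 + i.castSucc)

variable (c : BergeCycle F (t + 1)) (j : Fin (t + 1))

lemma eraseEdge_verts_last : (c.eraseEdge j).verts (Fin.last t) = c.verts j := by
  simp [add_assoc, add_comm 1 (Fin.last t), Fin.last_add_one]

lemma range_eraseEdge_verts_subset : Set.range (c.eraseEdge j).verts ⊆ Set.range c.verts := by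
  rintro _ ⟨i, rfl⟩
  exact ⟨_, rfl⟩

lemma range_eraseEdge_edges_subset : Set.range (c.eraseEdge j).edges ⊆ Set.range c.edges := by
  rintro _ ⟨i, rfl⟩
  exact ⟨_, rfl⟩

lemma edges_notMem_range_eraseEdge : c.edges j ∉ Set.range (c.eraseEdge j).edges := by
  rintro ⟨i, hi⟩
  have h : j + (i.castSucc + 1) = j + 0 := by
    rw [add_zero, add_comm i.castSucc, ← add_assoc]
    exact c.edges_inj hi
  exact Fin.succ_ne_zero i (Fin.coeSucc_eq_succ.symm.trans (add_left_cancel h))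

end BergeCycle

/-- Connectedness of the hypergraph `F`. -/
def CrossesEveryCut (F : Finset (Finset V)) : Prop :=
  ∀ C : Finset V, (∃ e ∈ F, ¬Disjoint e C) → (∃ e ∈ F, ¬e ⊆ C) →
    ∃ e ∈ F, ¬Disjoint e C ∧ ¬e ⊆ C

namespace BergeCycle

/-- An edge leaving the cycle is attached to it at a vertex; opening the cycle there and
prepending that edge gives the path. -/
theorem nonempty_bergePath (c : BergeCycle F (t + 1)) (hF : CrossesEveryCut F)
    (hcard : t + 1 < #(F.biUnion id)) : Nonempty (BergePath F (t + 1)) := by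
  set C := univ.image c.verts
  have hC : ∀ v, v ∈ C ↔ v ∈ Set.range c.verts := by simp [C]
  have hCcard : #C ≤ t + 1 := card_image_le.trans (by simp)
  obtain ⟨h, hhF, hmeet, hout⟩ := hF C
    ⟨c.edges 0, c.edges_mem 0, not_disjoint_iff.2 ⟨_, c.fst_mem 0, (hC _).2 ⟨0, rfl⟩⟩⟩
    (by
      by_contra! hsub
      have hFC : F.biUnion id ⊆ C := biUnion_subset.2 hsub
      have := card_le_card hFC
      omega)
  obtain ⟨x, hxh, hxC⟩ := not_disjoint_iff.1 hmeet
  obtain ⟨u, huh, huC⟩ := not_subset.1 hout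
  obtain ⟨j, hj0, hjh⟩ :
      ∃ j, (c.eraseEdge j).verts 0 ∈ h ∧ h ∉ Set.range (c.eraseEdge j).edges := by
    by_cases hh : h ∈ Set.range c.edges
    · obtain ⟨j, rfl⟩ := hh
      exact ⟨j, by simpa using c.snd_mem_add_one j, c.edges_notMem_range_eraseEdge j⟩
    · obtain ⟨i, rfl⟩ := (hC x).1 hxC
      exact ⟨i - 1, by simpa using hxh, fun hmem => hh (c.range_eraseEdge_edges_subset _ hmem)⟩
  exact ⟨(c.eraseEdge j).cons u h hhF huh hj0
    (fun hu => huC ((hC u).2 (c.range_eraseEdge_verts_subset j hu))) hjh⟩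

lemma exists_mem_edges_notMem_range_verts {s : ℕ} (hs : 1 ≤ s) (c : BergeCycle F (s + 1))
    (huni : (F : Set (Finset V)).Sized (s + 1)) :
    ∃ i, ∃ w ∈ c.edges i, w ∉ Set.range c.verts := by
  have : NeZero s := ⟨by omega⟩
  by_contra! hsub
  have hC : #(univ.image c.verts) = s + 1 := by simp [card_image_of_injective _ c.verts_inj]
  have heq : ∀ i, c.edges i = univ.image c.verts := fun i =>
    eq_of_subset_of_card_le (fun w hw => by simpa using hsub i w hw)
      (by rw [hC, huni (c.edges_mem i)])
  exact zero_ne_one (c.edges_inj ((heq 0).trans (heq 1).symm))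

/-- A vertex `w` off the cycle on the edge `c.edges i` turns the cycle into a Berge-path of
length `s + 1` starting at `w`; an edge `e ∋ w` outside the cycle either extends this path or,
as it contains `c.verts i` or `c.verts (i + 1)`, closes a Berge-cycle through `w`. -/
theorem nonempty_bergePath_or_nonempty_bergeCycle {s : ℕ} (hs : 1 ≤ s)
    (c : BergeCycle F (s + 1)) (huni : (F : Set (Finset V)).Sized (s + 1))
    (hout : ∀ v ∈ F.biUnion id, v ∉ Set.range c.verts →
      ∃ e ∈ F, v ∈ e ∧ e ∉ Set.range c.edges) :
    Nonempty (BergePath F (s + 2)) ∨ Nonempty (BergeCycle F (s + 2)) := by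
  have : NeZero s := ⟨by omega⟩
  obtain ⟨i, w, hwi, hwc⟩ := c.exists_mem_edges_notMem_range_verts hs huni
  obtain ⟨e, he, hwe, hec⟩ := hout w (mem_biUnion.2 ⟨_, c.edges_mem i, hwi⟩) hwc
  set P := c.eraseEdge i
  have hP0 : P.verts 0 = c.verts (i + 1) := by simp [P]
  have hPlast : P.verts (Fin.last s) = c.verts i := c.eraseEdge_verts_last i
  have hwP : w ∉ Set.range P.verts := fun h => hwc (c.range_eraseEdge_verts_subset i h)
  have heP : e ∉ Set.range P.edges := fun h => hec (c.range_eraseEdge_edges_subset i h)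
  have hei : e ≠ c.edges i := fun h => hec ⟨i, h.symm⟩
  have hiP : c.edges i ∉ Set.range P.edges := c.edges_notMem_range_eraseEdge i
  by_cases hz : ∃ z ∈ e, z ≠ w ∧ z ∉ Set.range c.verts
  · obtain ⟨z, hze, hzw, hzc⟩ := hz
    let Q := P.cons w (c.edges i) (c.edges_mem i) hwi (hP0 ▸ c.snd_mem_add_one i) hwP hiP
    refine Or.inl ⟨Q.cons z e he hze (by simpa [Q] using hwe) ?_ ?_⟩
    · rw [BergePath.range_cons_verts, Set.mem_insert_iff, not_or]
      exact ⟨hzw, fun h => hzc (c.range_eraseEdge_verts_subset i h)⟩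
    · rw [BergePath.range_cons_edges, Set.mem_insert_iff, not_or]
      exact ⟨hei, heP⟩
  push Not at hz
  have hsub : e ⊆ insert w (univ.image c.verts) := fun z hze => by
    by_cases hzw : z = w
    · simp [hzw]
    · simpa [hzw] using hz z hze hzw
  have hC : #(univ.image c.verts) = s + 1 := by simp [card_image_of_injective _ c.verts_inj]
  rcases mem_or_mem_of_subset_of_card_le hsub
      (by rw [card_insert_of_notMem (by simpa using hwc), hC, huni he])
      (by simp) (by simp) (c.verts_inj.ne (by simp : i ≠ i + 1)) with hie | hie
  · exact Or.inr (P.nonempty_bergeCycle_of_mem (c.edges_mem i) he hei.symm hwP hiP heP hwi hwe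
      (hP0 ▸ c.snd_mem_add_one i) (hPlast ▸ hie))
  · exact Or.inr (P.nonempty_bergeCycle_of_mem he (c.edges_mem i) hei hwP heP hiP hwe hwi
      (hP0 ▸ hie) (hPlast ▸ c.fst_mem i))

end BergeCycle

/-- A path of distinct vertices of `S` in the digraph whose out-neighbourhoods are the `N v`. -/
structure IsDipath (S : Finset V) (N : V → Finset V) {m : ℕ} (w : Fin (m + 1) → V) : Prop where
  injective : Injective w
  mem : ∀ i, w i ∈ S
  step : ∀ i : Fin m, w i.succ ∈ N (w i.castSucc)

namespace IsDipath

variable {S : Finset V} {N : V → Finset V} {m : ℕ} {w : Fin (m + 1) → V}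

lemma card_le (hw : IsDipath S N w) : m + 1 ≤ #S := by
  simpa using card_le_card_of_injOn (s := univ) w (fun i _ => hw.mem i) hw.injective.injOn

lemma snoc (hw : IsDipath S N w) {u : V} (huS : u ∈ S) (hu : u ∈ N (w (Fin.last m)))
    (hu' : u ∉ Set.range w) : IsDipath S N (Fin.snoc (α := fun _ => V) w u) where
  injective := Fin.snoc_injective_iff.2 ⟨hw.injective, hu'⟩
  mem := Fin.lastCases (by simpa using huS) fun i => by simpa using hw.mem i
  step := Fin.lastCases (by simpa using hu) fun i => by
    rw [Fin.succ_castSucc, Fin.snoc_castSucc, Fin.snoc_castSucc]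
    exact hw.step i

theorem exists_forall_mem_range (hN : ∀ v ∈ S, N v ⊆ S) (hw : IsDipath S N w) :
    ∃ (ℓ : ℕ) (c : Fin (ℓ + 1) → V), IsDipath S N c ∧
      ∀ u ∈ N (c (Fin.last ℓ)), u ∈ Set.range c := by
  obtain ⟨k, hk⟩ : ∃ k, #S = m + 1 + k := ⟨#S - (m + 1), by have := hw.card_le; omega⟩
  induction k generalizing m with
  | zero =>
    refine ⟨m, w, hw, fun u hu => ?_⟩
    by_contra hu'
    have := (hw.snoc (hN _ (hw.mem _) hu) hu hu').card_le
    omega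
  | succ k ih =>
    by_cases hmax : ∀ u ∈ N (w (Fin.last m)), u ∈ Set.range w
    · exact ⟨m, w, hw, hmax⟩
    push Not at hmax
    obtain ⟨u, hu, hu'⟩ := hmax
    exact ih (hw.snoc (hN _ (hw.mem _) hu) hu hu') (by omega)

/-- The segment of `w` from the first vertex that lies in `N (w (Fin.last m))` closes up. -/
theorem exists_closed_of_forall_mem_range (hw : IsDipath S N w)
    (hmax : ∀ u ∈ N (w (Fin.last m)), u ∈ Set.range w) (hne : (N (w (Fin.last m))).Nonempty) :
    ∃ (ℓ : ℕ) (c : Fin (ℓ + 1) → V), IsDipath S N c ∧ c 0 ∈ N (c (Fin.last ℓ)) ∧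
      #(N (w (Fin.last m))) ≤ ℓ + 1 := by
  set a := w (Fin.last m)
  obtain ⟨j, hj, hjmin⟩ := (univ.filter fun j => w j ∈ N a).exists_min_image Fin.val (by
    obtain ⟨u, hu⟩ := hne
    obtain ⟨j, rfl⟩ := hmax u hu
    exact ⟨j, by simpa using hu⟩)
  simp only [mem_filter, mem_univ, true_and] at hj hjmin
  let c : Fin (m - j + 1) → V := fun i => w ⟨j + i, by omega⟩
  refine ⟨m - j, c, ⟨fun i i' h => ?_, fun i => hw.mem _, fun i => ?_⟩, ?_, ?_⟩
  · have := congrArg Fin.val (hw.injective h)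
    simp only at this
    exact Fin.ext (by omega)
  · have h := hw.step ⟨j + i, by omega⟩
    simp only [Fin.succ_mk, Fin.castSucc_mk] at h
    simpa [c, add_assoc] using h
  · have h0 : c 0 = w j := congrArg w (Fin.ext (by simp))
    have hl : c (Fin.last (m - j)) = a := congrArg w (Fin.ext (by simp; omega))
    rw [h0, hl]
    exact hj
  · calc #(N a) ≤ #(univ.image c) := card_le_card fun u hu => by
          obtain ⟨j', rfl⟩ := hmax u hu
          have := hjmin j' hu
          exact mem_image.2 ⟨⟨j' - j, by omega⟩, mem_univ _, by simp [c]; congr; omega⟩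
      _ ≤ m - j + 1 := card_image_le.trans (by simp)

theorem exists_closed (hN : ∀ v ∈ S, N v ⊆ S) {r : ℕ} (hdeg : ∀ v ∈ S, r ≤ #(N v)) (hr : 0 < r)
    (hS : S.Nonempty) :
    ∃ (ℓ : ℕ) (c : Fin (ℓ + 1) → V), IsDipath S N c ∧ c 0 ∈ N (c (Fin.last ℓ)) ∧ r ≤ ℓ + 1 := by
  obtain ⟨v, hv⟩ := hS
  have hv' : IsDipath S N fun _ : Fin 1 => v :=
    ⟨fun _ _ _ => Subsingleton.elim (α := Fin 1) _ _, fun _ => hv, fun i => i.elim0⟩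
  obtain ⟨m, w, hw, hmax⟩ := exists_forall_mem_range hN hv'
  have hdeg' := hdeg _ (hw.mem (Fin.last m))
  obtain ⟨ℓ, c, hc, hclosed, hlen⟩ := hw.exists_closed_of_forall_mem_range hmax
    (card_pos.1 (by omega))
  exact ⟨ℓ, c, hc, hclosed, hdeg'.trans hlen⟩

end IsDipath

structure MatchesVertices (F : Finset (Finset V)) (M : V → Finset V) : Prop where
  mem_self : ∀ v ∈ F.biUnion id, v ∈ M v
  mem : ∀ v ∈ F.biUnion id, M v ∈ F
  injOn : Set.InjOn M (F.biUnion id)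

namespace MatchesVertices

variable {M : V → Finset V} {ℓ : ℕ} {c : Fin (ℓ + 1) → V}

def bergePath (hM : MatchesVertices F M) (hc : IsDipath (F.biUnion id) M c) : BergePath F ℓ where
  verts := c
  edges i := M (c i.castSucc)
  verts_inj := hc.injective
  edges_inj _ _ h := Fin.castSucc_injective _ (hc.injective (hM.injOn (hc.mem _) (hc.mem _) h))
  edges_mem _ := hM.mem _ (hc.mem _)
  fst_mem _ := hM.mem_self _ (hc.mem _)
  snd_mem := hc.step

def bergeCycle (hM : MatchesVertices F M) (hc : IsDipath (F.biUnion id) M c)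
    (hclosed : c 0 ∈ M (c (Fin.last ℓ))) : BergeCycle F (ℓ + 1) :=
  (hM.bergePath hc).close (M (c (Fin.last ℓ))) (hM.mem _ (hc.mem _))
    (by
      rintro ⟨i, hi⟩
      exact Fin.castSucc_ne_last i (hc.injective (hM.injOn (hc.mem _) (hc.mem _) hi)))
    hclosed (hM.mem_self _ (hc.mem _))

lemma bergeCycle_edges (hM : MatchesVertices F M) (hc : IsDipath (F.biUnion id) M c)
    (hclosed : c 0 ∈ M (c (Fin.last ℓ))) (i : Fin (ℓ + 1)) :
    (hM.bergeCycle hc hclosed).edges i = M (c i) := by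
  induction i using Fin.lastCases with
  | last => exact Fin.snoc_last (α := fun _ => Finset V) _ _
  | cast i => exact Fin.snoc_castSucc (α := fun _ => Finset V) _ _ _

/-- The out-neighbourhoods of the digraph `v → M v` are the `r`-edges `M v`, so it has a cycle
of length at least `r`. -/
theorem nonempty_bergePath (hM : MatchesVertices F M) (hr : 2 ≤ r)
    (huni : (F : Set (Finset V)).Sized r) (hF : CrossesEveryCut F)
    (hcard : r + 1 < #(F.biUnion id)) : Nonempty (BergePath F (r + 1)) := by
  obtain ⟨ℓ, c, hc, hclosed, hlen⟩ := IsDipath.exists_closed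
    (fun v hv => subset_biUnion_of_mem id (hM.mem v hv)) (fun v hv => (huni (hM.mem v hv)).ge)
    (by omega) (card_pos.1 (by omega))
  obtain hℓ | rfl | rfl : r + 1 ≤ ℓ ∨ ℓ = r ∨ r = ℓ + 1 := by omega
  · exact ⟨(hM.bergePath hc).take hℓ⟩
  · exact (hM.bergeCycle hc hclosed).nonempty_bergePath hF hcard
  · refine ((hM.bergeCycle hc hclosed).nonempty_bergePath_or_nonempty_bergeCycle (by omega)
      huni fun v hv hvc => ⟨M v, hM.mem v hv, hM.mem_self v hv, ?_⟩).elim id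
      fun ⟨C⟩ => C.nonempty_bergePath hF hcard
    rintro ⟨i, hi⟩
    rw [bergeCycle_edges] at hi
    exact hvc ⟨i, hM.injOn (hc.mem i) hv hi⟩

end MatchesVertices

theorem crossesEveryCut_of_forall_ssubset (hsub : ∀ G ⊂ F, #G ≤ #(G.biUnion id))
    (hF : #(F.biUnion id) < #F) : CrossesEveryCut F := by
  rintro C ⟨e₁, he₁, h₁⟩ ⟨e₂, he₂, h₂⟩
  by_contra! hno
  set F₁ := F.filter (· ⊆ C)
  set F₂ := F.filter fun e => ¬e ⊆ C
  have hF₁ : F₁ ⊂ F := filter_ssubset.2 ⟨e₂, he₂, h₂⟩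
  have hF₂ : F₂ ⊂ F := filter_ssubset.2 ⟨e₁, he₁, not_not.2 (hno e₁ he₁ h₁)⟩
  have hdisj : Disjoint (F₁.biUnion id) (F₂.biUnion id) := by
    refine Disjoint.mono_left (biUnion_subset.2 fun e he => (mem_filter.1 he).2) ?_
    exact ((disjoint_biUnion_left _ _ _).2 fun e he => by
      by_contra h
      exact (mem_filter.1 he).2 (hno e (mem_filter.1 he).1 h)).symm
  have hcardF : #F₁ + #F₂ = #F := card_filter_add_card_filter_not _
  have hcardV : #(F.biUnion id) = #(F₁.biUnion id) + #(F₂.biUnion id) := by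
    rw [← card_union_of_disjoint hdisj, ← union_biUnion, filter_union_filter_not_eq]
  have := hsub F₁ hF₁
  have := hsub F₂ hF₂
  omega

theorem exists_matchesVertices_of_forall_ssubset (hsub : ∀ G ⊂ F, #G ≤ #(G.biUnion id))
    (hF : #(F.biUnion id) < #F) : ∃ M, MatchesVertices F M := by
  obtain ⟨e₀, he₀⟩ : F.Nonempty := card_pos.1 (by omega)
  have hall : ∀ s : Finset (F.erase e₀), #s ≤ #(s.biUnion Subtype.val) := fun s => by
    have himg : s.image Subtype.val ⊆ F.erase e₀ := fun e he => by
      obtain ⟨x, -, rfl⟩ := mem_image.1 he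
      exact x.2
    simpa [card_image_of_injective _ Subtype.val_injective, image_biUnion] using
      hsub _ (himg.trans_ssubset (erase_ssubset he₀))
  obtain ⟨f, hf, hfmem⟩ := (all_card_le_biUnion_card_iff_exists_injective _).1 hall
  have himage : univ.image f = F.biUnion id := by
    refine eq_of_subset_of_card_le (fun v hv => ?_) ?_
    · obtain ⟨x, -, rfl⟩ := mem_image.1 hv
      exact mem_biUnion.2 ⟨x, mem_of_mem_erase x.2, hfmem x⟩
    · rw [card_image_of_injective _ hf, card_univ, Fintype.card_coe, card_erase_of_mem he₀]
      omega
  have hsurj : ∀ v ∈ F.biUnion id, ∃ x, f x = v := fun v hv => by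
    rw [← himage, mem_image] at hv
    obtain ⟨x, -, hx⟩ := hv
    exact ⟨x, hx⟩
  choose g hg using hsurj
  refine ⟨fun v => if hv : v ∈ F.biUnion id then g v hv else ∅,
    ⟨fun v hv => ?_, fun v hv => ?_, fun u hu v hv huv => ?_⟩⟩
  · simpa only [dif_pos hv, hg] using hfmem (g v hv)
  · simpa only [dif_pos hv] using mem_of_mem_erase (g v hv).2
  · simp only [dif_pos (mem_coe.1 hu), dif_pos (mem_coe.1 hv)] at huv
    rw [← hg u hu, ← hg v hv, Subtype.ext huv]

theorem add_one_lt_card_biUnion (hr : 1 ≤ r) (huni : (F : Set (Finset V)).Sized r)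
    (hF : #(F.biUnion id) < #F) : r + 1 < #(F.biUnion id) := by
  have hpow : F ⊆ powersetCard r (F.biUnion id) := fun e he =>
    mem_powersetCard.2 ⟨subset_biUnion_of_mem id he, huni he⟩
  have := card_le_card hpow
  rw [card_powersetCard] at this
  by_contra! hsmall
  obtain hlt | heq | heq : #(F.biUnion id) < r ∨ #(F.biUnion id) = r ∨ #(F.biUnion id) = r + 1 := by
    omega
  · rw [Nat.choose_eq_zero_of_lt hlt] at this; omega
  · rw [heq, Nat.choose_self] at this; omega
  · rw [heq, Nat.choose_succ_self_right] at this; omega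

theorem card_le_card_biUnion_of_isEmpty_bergePath (hr : 2 ≤ r) (F : Finset (Finset V))
    (huni : (F : Set (Finset V)).Sized r) (hpath : IsEmpty (BergePath F (r + 1))) :
    #F ≤ #(F.biUnion id) := by
  induction F using Finset.strongInduction with
  | H F ih =>
  by_contra! hF
  have hsub : ∀ G ⊂ F, #G ≤ #(G.biUnion id) := fun G hG =>
    ih G hG (huni.mono (coe_subset.2 hG.subset)) ⟨fun P => hpath.false (P.mono hG.subset)⟩
  obtain ⟨M, hM⟩ := exists_matchesVertices_of_forall_ssubset hsub hF
  exact hpath.false (hM.nonempty_bergePath hr huni (crossesEveryCut_of_forall_ssubset hsub hF)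
    (add_one_lt_card_biUnion (by omega) huni hF)).some

/-- Davoodi–Győri–Methuku–Tompkins. For `r ≥ 3`, every `r`-uniform
hypergraph on `n` vertices with no Berge-path of length `r+1` has at most `n` hyperedges
(the bound `(n/k)·C(k,r)` with `k = r+1`). -/
theorem davoodi_gyori_methuku_tompkins
    (n r : ℕ) (hr : 3 ≤ r) (H : Finset (Finset (Fin n)))
    (huni : ∀ e ∈ H, e.card = r) (hpath : IsEmpty (BergePath H (r + 1))) :
    H.card ≤ n :=
  (card_le_card_biUnion_of_isEmpty_bergePath (by omega) H huni hpath).trans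
    ((card_le_univ _).trans_eq (Fintype.card_fin n))
end
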